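/- arXiv:hep-th/9409058 — 5 statements merged into one kernel-verified Lean document; each statement's English description precedes it below -/
import Mathlib

section
/- Let R′ be an n⁴ complex array which is of real type II with respect to an involution σ of {1,…,n}, or of antireal type II with respect to σ. Then the braided covector algebra V̌(R′,R) admits a (necessarily unique) star structure * satisfying x_i* = x_{σ(i)} for all i = 1,…,n. -/
open scoped ComplexConjugate

noncomputable section

/-- An n⁴ array `R^i{}_j{}^k{}_l` viewed as an n²×n² matrix with row index `(i,k)`,
column index `(j,l)`. -/
def toMat (n : ℕ) (R : Fin n → Fin n → Fin n → Fin n → ℂ) :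
    Matrix (Fin n × Fin n) (Fin n × Fin n) ℂ :=
  Matrix.of fun p q => R p.1 q.1 p.2 q.2

/-- Entries `(R⁻¹)^i{}_j{}^k{}_l` of the matrix inverse of `R`. -/
def invEntry (n : ℕ) (R : Fin n → Fin n → Fin n → Fin n → ℂ)
    (i j k l : Fin n) : ℂ :=
  (toMat n R)⁻¹ (i, k) (j, l)

/-- `R` is of real type I: `conj (R^i{}_j{}^k{}_l) = R^l{}_k{}^j{}_i`. -/
def RealTypeI (n : ℕ) (R : Fin n → Fin n → Fin n → Fin n → ℂ) : Prop :=
  ∀ i j k l, conj (R i j k l) = R l k j i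

/-- `R` is of antireal type I: `R` invertible and
`conj (R^i{}_j{}^k{}_l) = (R⁻¹)^j{}_i{}^l{}_k`. -/
def AntirealTypeI (n : ℕ) (R : Fin n → Fin n → Fin n → Fin n → ℂ) : Prop :=
  IsUnit (toMat n R) ∧ ∀ i j k l, conj (R i j k l) = invEntry n R j i l k

/-- `R` is of real type II w.r.t. the involution `σ`:
`conj (R^i{}_j{}^k{}_l) = R^{σk}{}_{σl}{}^{σi}{}_{σj}`. -/
def RealTypeII (n : ℕ) (R : Fin n → Fin n → Fin n → Fin n → ℂ)
    (σ : Fin n → Fin n) : Prop :=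
  ∀ i j k l, conj (R i j k l) = R (σ k) (σ l) (σ i) (σ j)

/-- `R` is of antireal type II w.r.t. the involution `σ`: `R` invertible and
`conj (R^i{}_j{}^k{}_l) = (R⁻¹)^{σi}{}_{σj}{}^{σk}{}_{σl}`. -/
def AntirealTypeII (n : ℕ) (R : Fin n → Fin n → Fin n → Fin n → ℂ)
    (σ : Fin n → Fin n) : Prop :=
  IsUnit (toMat n R) ∧
    ∀ i j k l, conj (R i j k l) = invEntry n R (σ i) (σ j) (σ k) (σ l)

/-- The metric `η` (entries `η^{ij} = η i j`) is `R`-covariant: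
`Σ η^{ia} η^{jb} R^k{}_a{}^l{}_b = Σ R^i{}_a{}^j{}_b η^{ak} η^{bl}`. -/
def MetricCovariant (n : ℕ) (R : Fin n → Fin n → Fin n → Fin n → ℂ)
    (η : Matrix (Fin n) (Fin n) ℂ) : Prop :=
  ∀ i j k l, (∑ a : Fin n, ∑ b : Fin n, η i a * η j b * R k a l b) =
    ∑ a : Fin n, ∑ b : Fin n, R i a j b * η a k * η b l

/-- The metric `η` is real: `conj (η^{ij}) = η_{ji}`, where the lower-index entries
`η_{ij}` are those of the transposed inverse, i.e. `η_{ji} = (η⁻¹) i j`. -/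
def MetricReal (n : ℕ) (η : Matrix (Fin n) (Fin n) ℂ) : Prop :=
  ∀ i j, conj (η i j) = η⁻¹ i j

/-- The relations `x_i x_j = Σ_{a,b} R'^a{}_i{}^b{}_j x_b x_a` of the braided
covector algebra, as a relation on the free algebra. -/
inductive CovRel (n : ℕ) (R' : Fin n → Fin n → Fin n → Fin n → ℂ) :
    FreeAlgebra ℂ (Fin n) → FreeAlgebra ℂ (Fin n) → Prop
  | rel (i j : Fin n) :
      CovRel n R' (FreeAlgebra.ι ℂ i * FreeAlgebra.ι ℂ j)
        (∑ a : Fin n, ∑ b : Fin n,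
          R' a i b j • (FreeAlgebra.ι ℂ b * FreeAlgebra.ι ℂ a))

/-- The braided covector algebra `V̌(R',R)`: the free algebra on `x_1,…,x_n` modulo
the two-sided ideal generated by `x_i x_j − Σ R'^a{}_i{}^b{}_j x_b x_a`. -/
abbrev CovAlg (n : ℕ) (R' : Fin n → Fin n → Fin n → Fin n → ℂ) :=
  RingQuot (CovRel n R')

/-- The generator `x_i` of the braided covector algebra. -/
def xg (n : ℕ) (R' : Fin n → Fin n → Fin n → Fin n → ℂ) (i : Fin n) :
    CovAlg n R' :=
  RingQuot.mkAlgHom ℂ (CovRel n R') (FreeAlgebra.ι ℂ i)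

/-- The relations `v^i v^j = Σ_{a,b} R'^i{}_a{}^j{}_b v^b v^a` of the braided
vector algebra, as a relation on the free algebra. -/
inductive VecRel (n : ℕ) (R' : Fin n → Fin n → Fin n → Fin n → ℂ) :
    FreeAlgebra ℂ (Fin n) → FreeAlgebra ℂ (Fin n) → Prop
  | rel (i j : Fin n) :
      VecRel n R' (FreeAlgebra.ι ℂ i * FreeAlgebra.ι ℂ j)
        (∑ a : Fin n, ∑ b : Fin n,
          R' i a j b • (FreeAlgebra.ι ℂ b * FreeAlgebra.ι ℂ a))

/-- The braided vector algebra `V(R',R)`: the free algebra on `v^1,…,v^n` modulo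
the two-sided ideal generated by `v^i v^j − Σ R'^i{}_a{}^j{}_b v^b v^a`. -/
abbrev VecAlg (n : ℕ) (R' : Fin n → Fin n → Fin n → Fin n → ℂ) :=
  RingQuot (VecRel n R')

/-- The generator `v^i` of the braided vector algebra. -/
def vg (n : ℕ) (R' : Fin n → Fin n → Fin n → Fin n → ℂ) (i : Fin n) :
    VecAlg n R' :=
  RingQuot.mkAlgHom ℂ (VecRel n R') (FreeAlgebra.ι ℂ i)

/-- The relations of the braided tensor square of the braided covector algebra:
generators `x_i = ι (inl i)`, `y_i = ι (inr i)`, with `x`- and `y`-relations from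
`R'` and cross relations `y_i x_j = Σ_{a,b} R^a{}_i{}^b{}_j x_b y_a`. -/
inductive SqRel (n : ℕ) (R' R : Fin n → Fin n → Fin n → Fin n → ℂ) :
    FreeAlgebra ℂ (Fin n ⊕ Fin n) → FreeAlgebra ℂ (Fin n ⊕ Fin n) → Prop
  | xx (i j : Fin n) :
      SqRel n R' R (FreeAlgebra.ι ℂ (Sum.inl i) * FreeAlgebra.ι ℂ (Sum.inl j))
        (∑ a : Fin n, ∑ b : Fin n, R' a i b j •
          (FreeAlgebra.ι ℂ (Sum.inl b) * FreeAlgebra.ι ℂ (Sum.inl a)))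
  | yy (i j : Fin n) :
      SqRel n R' R (FreeAlgebra.ι ℂ (Sum.inr i) * FreeAlgebra.ι ℂ (Sum.inr j))
        (∑ a : Fin n, ∑ b : Fin n, R' a i b j •
          (FreeAlgebra.ι ℂ (Sum.inr b) * FreeAlgebra.ι ℂ (Sum.inr a)))
  | yx (i j : Fin n) :
      SqRel n R' R (FreeAlgebra.ι ℂ (Sum.inr i) * FreeAlgebra.ι ℂ (Sum.inl j))
        (∑ a : Fin n, ∑ b : Fin n, R a i b j •
          (FreeAlgebra.ι ℂ (Sum.inl b) * FreeAlgebra.ι ℂ (Sum.inr a)))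

/-- The braided tensor square `B` of the braided covector algebra. -/
abbrev SqAlg (n : ℕ) (R' R : Fin n → Fin n → Fin n → Fin n → ℂ) :=
  RingQuot (SqRel n R' R)

/-- The generator `x_i` of the braided tensor square. -/
def Xg (n : ℕ) (R' R : Fin n → Fin n → Fin n → Fin n → ℂ) (i : Fin n) :
    SqAlg n R' R :=
  RingQuot.mkAlgHom ℂ (SqRel n R' R) (FreeAlgebra.ι ℂ (Sum.inl i))

/-- The generator `y_i` of the braided tensor square. -/
def Yg (n : ℕ) (R' R : Fin n → Fin n → Fin n → Fin n → ℂ) (i : Fin n) :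
    SqAlg n R' R :=
  RingQuot.mkAlgHom ℂ (SqRel n R' R) (FreeAlgebra.ι ℂ (Sum.inr i))

/-- A conjugate-linear, antimultiplicative, unital map between ℂ-algebras. -/
def IsConjLinearAntiHom {A B : Type*} [Semiring A] [Algebra ℂ A]
    [Semiring B] [Algebra ℂ B] (f : A → B) : Prop :=
  (∀ a b : A, f (a + b) = f a + f b) ∧
  (∀ (c : ℂ) (a : A), f (c • a) = (starRingEnd ℂ) c • f a) ∧
  (∀ a b : A, f (a * b) = f b * f a) ∧
  f 1 = 1

/-- A star structure on a ℂ-algebra: a conjugate-linear, antimultiplicative,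
unital, involutive map. -/
def IsStarStructure {A : Type*} [Semiring A] [Algebra ℂ A] (f : A → A) : Prop :=
  (∀ a b : A, f (a + b) = f a + f b) ∧
  (∀ (c : ℂ) (a : A), f (c • a) = (starRingEnd ℂ) c • f a) ∧
  (∀ a b : A, f (a * b) = f b * f a) ∧
  f 1 = 1 ∧
  (∀ a : A, f (f a) = a)

/-! A conjugate-linear antihomomorphism out of `FreeAlgebra ℂ X` is an algebra map into the
opposite algebra with `ℂ` acting through complex conjugation, so `x_i ↦ x_{σ i}` extends from the
generators. It descends to `V̌(R′,R)` because it sends the relation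
`x_i x_j = Σ R′^a{}_i{}^b{}_j x_b x_a` to `x_{σj} x_{σi} = Σ conj (R′^a{}_i{}^b{}_j) x_{σa} x_{σb}`:
for real type II this is a relabelled defining relation, for antireal type II it is the system of
defining relations solved with `R′⁻¹`. Involutivity and uniqueness are checked on generators. -/

open MulOpposite

namespace FreeAlgebra

variable {X B : Type*} [Semiring B] [Algebra ℂ B]

/-- `lift` for the ℂ-algebra structure on `Bᵐᵒᵖ` twisted by complex conjugation. -/
def conjLiftOp (g : X → B) : FreeAlgebra ℂ X →+* Bᵐᵒᵖ :=
  letI : Algebra ℂ Bᵐᵒᵖ := Algebra.compHom Bᵐᵒᵖ (starRingEnd ℂ)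
  (lift ℂ (op ∘ g)).toRingHom

@[simp]
theorem conjLiftOp_ι (g : X → B) (x : X) : conjLiftOp g (ι ℂ x) = op (g x) :=
  letI : Algebra ℂ Bᵐᵒᵖ := Algebra.compHom Bᵐᵒᵖ (starRingEnd ℂ)
  lift_ι_apply (op ∘ g) x

@[simp]
theorem conjLiftOp_algebraMap (g : X → B) (c : ℂ) :
    conjLiftOp g (algebraMap ℂ _ c) = algebraMap ℂ Bᵐᵒᵖ (starRingEnd ℂ c) :=
  letI : Algebra ℂ Bᵐᵒᵖ := Algebra.compHom Bᵐᵒᵖ (starRingEnd ℂ)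
  (lift ℂ (op ∘ g)).commutes c

@[simp]
theorem conjLiftOp_smul (g : X → B) (c : ℂ) (w : FreeAlgebra ℂ X) :
    conjLiftOp g (c • w) = starRingEnd ℂ c • conjLiftOp g w := by
  rw [Algebra.smul_def, map_mul, conjLiftOp_algebraMap, ← Algebra.smul_def]

end FreeAlgebra

theorem RingQuot.freeAlgebra_induction {X : Type*} {r : FreeAlgebra ℂ X → FreeAlgebra ℂ X → Prop}
    {P : RingQuot r → Prop} (algebraMap : ∀ c : ℂ, P (algebraMap ℂ _ c))
    (ι : ∀ x, P (mkAlgHom ℂ r (FreeAlgebra.ι ℂ x)))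
    (mul : ∀ a b, P a → P b → P (a * b)) (add : ∀ a b, P a → P b → P (a + b)) (a : RingQuot r) :
    P a := by
  obtain ⟨w, rfl⟩ := mkAlgHom_surjective ℂ r a
  induction w using FreeAlgebra.induction with
  | grade0 c => simpa only [AlgHom.commutes] using algebraMap c
  | grade1 x => exact ι x
  | mul w₁ w₂ h₁ h₂ => simpa only [map_mul] using mul _ _ h₁ h₂
  | add w₁ w₂ h₁ h₂ => simpa only [map_add] using add _ _ h₁ h₂

theorem IsStarStructure.isConjLinearAntiHom {A : Type*} [Semiring A] [Algebra ℂ A] {f : A → A}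
    (hf : IsStarStructure f) : IsConjLinearAntiHom f :=
  ⟨hf.1, hf.2.1, hf.2.2.1, hf.2.2.2.1⟩

namespace IsConjLinearAntiHom

variable {A B : Type*} [Semiring A] [Algebra ℂ A] [Semiring B] [Algebra ℂ B] {f : A → B}

theorem map_algebraMap (hf : IsConjLinearAntiHom f) (c : ℂ) :
    f (algebraMap ℂ A c) = algebraMap ℂ B (starRingEnd ℂ c) := by
  obtain ⟨-, hsmul, -, hone⟩ := hf
  rw [Algebra.algebraMap_eq_smul_one, hsmul, hone, ← Algebra.algebraMap_eq_smul_one]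

theorem ext_freeAlgebra {X : Type*} {r : FreeAlgebra ℂ X → FreeAlgebra ℂ X → Prop}
    {f g : RingQuot r → B} (hf : IsConjLinearAntiHom f) (hg : IsConjLinearAntiHom g)
    (h : ∀ x, f (RingQuot.mkAlgHom ℂ r (FreeAlgebra.ι ℂ x)) =
      g (RingQuot.mkAlgHom ℂ r (FreeAlgebra.ι ℂ x))) :
    f = g := by
  funext a
  induction a using RingQuot.freeAlgebra_induction with
  | algebraMap c => rw [hf.map_algebraMap, hg.map_algebraMap]
  | ι x => exact h x
  | mul a b ha hb => rw [hf.2.2.1, hg.2.2.1, ha, hb]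
  | add a b ha hb => rw [hf.1, hg.1, ha, hb]

end IsConjLinearAntiHom

namespace RingQuot

variable {X : Type*} {r : FreeAlgebra ℂ X → FreeAlgebra ℂ X → Prop}

section

variable {B : Type*} [Semiring B] [Algebra ℂ B]

def conjLift (g : X → B)
    (hg : ∀ ⦃w₁ w₂⦄, r w₁ w₂ → FreeAlgebra.conjLiftOp g w₁ = FreeAlgebra.conjLiftOp g w₂) :
    RingQuot r → B :=
  fun a => unop (lift ⟨FreeAlgebra.conjLiftOp g, hg⟩ a)

variable {g : X → B}
  {hg : ∀ ⦃w₁ w₂⦄, r w₁ w₂ → FreeAlgebra.conjLiftOp g w₁ = FreeAlgebra.conjLiftOp g w₂}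

theorem conjLift_mkAlgHom (w : FreeAlgebra ℂ X) :
    conjLift g hg (mkAlgHom ℂ r w) = unop (FreeAlgebra.conjLiftOp g w) := by
  rw [conjLift, ← AlgHom.coe_toRingHom, mkAlgHom_coe, lift_mkRingHom_apply]

theorem conjLift_ι (x : X) : conjLift g hg (mkAlgHom ℂ r (FreeAlgebra.ι ℂ x)) = g x := by
  rw [conjLift_mkAlgHom, FreeAlgebra.conjLiftOp_ι, unop_op]

theorem isConjLinearAntiHom_conjLift : IsConjLinearAntiHom (conjLift g hg) := by
  refine ⟨fun a b => ?_, fun c a => ?_, fun a b => ?_, ?_⟩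
  · simp only [conjLift, map_add, unop_add]
  · obtain ⟨w, rfl⟩ := mkAlgHom_surjective ℂ r a
    rw [← map_smul, conjLift_mkAlgHom, conjLift_mkAlgHom, FreeAlgebra.conjLiftOp_smul, unop_smul]
  · simp only [conjLift, map_mul, unop_mul]
  · simp only [conjLift, map_one, unop_one]

end

theorem existsUnique_isStarStructure {σ : X → X} (hσ : Function.Involutive σ)
    (hr : ∀ ⦃w₁ w₂⦄, r w₁ w₂ →
      FreeAlgebra.conjLiftOp (fun x => mkAlgHom ℂ r (FreeAlgebra.ι ℂ (σ x))) w₁ =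
        FreeAlgebra.conjLiftOp (fun x => mkAlgHom ℂ r (FreeAlgebra.ι ℂ (σ x))) w₂) :
    ∃! f : RingQuot r → RingQuot r, IsStarStructure f ∧
      ∀ x, f (mkAlgHom ℂ r (FreeAlgebra.ι ℂ x)) = mkAlgHom ℂ r (FreeAlgebra.ι ℂ (σ x)) := by
  set f := conjLift _ hr
  have hf : IsConjLinearAntiHom f := isConjLinearAntiHom_conjLift
  have hf_ι : ∀ x, f (mkAlgHom ℂ r (FreeAlgebra.ι ℂ x)) = mkAlgHom ℂ r (FreeAlgebra.ι ℂ (σ x)) :=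
    conjLift_ι
  have hff : ∀ a, f (f a) = a := by
    intro a
    induction a using freeAlgebra_induction with
    | algebraMap c => rw [hf.map_algebraMap, hf.map_algebraMap, Complex.conj_conj]
    | ι x => rw [hf_ι, hf_ι, hσ x]
    | mul a b ha hb => rw [hf.2.2.1, hf.2.2.1, ha, hb]
    | add a b ha hb => rw [hf.1, hf.1, ha, hb]
  refine ⟨f, ⟨⟨hf.1, hf.2.1, hf.2.2.1, hf.2.2.2, hff⟩, hf_ι⟩, fun g ⟨hg, hg_ι⟩ => ?_⟩
  exact hg.isConjLinearAntiHom.ext_freeAlgebra hf fun x => by rw [hg_ι, hf_ι]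

end RingQuot

theorem Equiv.sum_sum_comp {ι M : Type*} [Fintype ι] [AddCommMonoid M] (e : ι ≃ ι)
    (f : ι → ι → M) : ∑ a, ∑ b, f (e a) (e b) = ∑ a, ∑ b, f a b :=
  Fintype.sum_equiv e _ _ fun _ => Fintype.sum_equiv e _ _ fun _ => rfl

section CovAlg

variable {n : ℕ} {R' : Fin n → Fin n → Fin n → Fin n → ℂ}

theorem xg_mul_xg (i j : Fin n) :
    xg n R' i * xg n R' j = ∑ a, ∑ b, R' a i b j • (xg n R' b * xg n R' a) := by
  simpa only [xg, map_mul, map_sum, map_smul] using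
    RingQuot.mkAlgHom_rel ℂ (CovRel.rel (R' := R') i j)

theorem sum_invEntry_smul_xg_mul_xg (hu : IsUnit (toMat n R')) (i j : Fin n) :
    ∑ a, ∑ b, invEntry n R' a i b j • (xg n R' a * xg n R' b) = xg n R' j * xg n R' i := by
  set M := toMat n R'
  have hM : M * M⁻¹ = 1 := Matrix.mul_nonsing_inv _ ((Matrix.isUnit_iff_isUnit_det _).mp hu)
  have hrel : ∀ p : Fin n × Fin n,
      xg n R' p.1 * xg n R' p.2 = ∑ q : Fin n × Fin n, M q p • (xg n R' q.2 * xg n R' q.1) := by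
    intro p
    rw [xg_mul_xg, Fintype.sum_prod_type]
    rfl
  calc ∑ a, ∑ b, invEntry n R' a i b j • (xg n R' a * xg n R' b)
      = ∑ p : Fin n × Fin n, M⁻¹ p (i, j) • (xg n R' p.1 * xg n R' p.2) := by
        rw [Fintype.sum_prod_type]; rfl
    _ = ∑ q : Fin n × Fin n, (M * M⁻¹) q (i, j) • (xg n R' q.2 * xg n R' q.1) := by
        simp only [hrel, Finset.smul_sum, smul_smul, Matrix.mul_apply, Finset.sum_smul]
        rw [Finset.sum_comm]
        simp only [mul_comm]
    _ = xg n R' j * xg n R' i := by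
        simp [hM, Matrix.one_apply, ite_smul]

variable {σ : Fin n → Fin n}

theorem RealTypeII.xg_mul_xg_eq_sum_conj (hR' : RealTypeII n R' σ) (hσ : Function.Involutive σ)
    (i j : Fin n) :
    xg n R' (σ j) * xg n R' (σ i) =
      ∑ a, ∑ b, starRingEnd ℂ (R' a i b j) • (xg n R' (σ a) * xg n R' (σ b)) := by
  simp only [hR' _ i _ j]
  rw [xg_mul_xg, ← (hσ.toPerm σ).sum_sum_comp, Finset.sum_comm]
  simp only [Function.Involutive.coe_toPerm]

theorem AntirealTypeII.xg_mul_xg_eq_sum_conj (hR' : AntirealTypeII n R' σ)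
    (hσ : Function.Involutive σ) (i j : Fin n) :
    xg n R' (σ j) * xg n R' (σ i) =
      ∑ a, ∑ b, starRingEnd ℂ (R' a i b j) • (xg n R' (σ a) * xg n R' (σ b)) := by
  simp only [hR'.2 _ i _ j]
  exact (((hσ.toPerm σ).sum_sum_comp fun a b =>
    invEntry n R' a (σ i) b (σ j) • (xg n R' a * xg n R' b)).trans
      (sum_invEntry_smul_xg_mul_xg hR'.1 _ _)).symm

end CovAlg

theorem stmt0_general (n : ℕ)
    (R' : Fin n → Fin n → Fin n → Fin n → ℂ)
    (σ : Fin n → Fin n) (hσ : Function.Involutive σ)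
    (hR' : RealTypeII n R' σ ∨ AntirealTypeII n R' σ) :
    ∃! f : CovAlg n R' → CovAlg n R',
      IsStarStructure f ∧ ∀ i : Fin n, f (xg n R' i) = xg n R' (σ i) := by
  have key (i j : Fin n) : xg n R' (σ j) * xg n R' (σ i) =
      ∑ a, ∑ b, starRingEnd ℂ (R' a i b j) • (xg n R' (σ a) * xg n R' (σ b)) := by
    rcases hR' with hR' | hR'
    exacts [hR'.xg_mul_xg_eq_sum_conj hσ i j, hR'.xg_mul_xg_eq_sum_conj hσ i j]
  refine RingQuot.existsUnique_isStarStructure hσ ?_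
  rintro _ _ ⟨i, j⟩
  simp only [map_mul, map_sum, FreeAlgebra.conjLiftOp_smul, FreeAlgebra.conjLiftOp_ι, ← op_mul,
    ← op_smul, ← Finset.op_sum]
  exact congrArg op (key i j)

/-- if `R'` is of real or antireal type II w.r.t. an involution `σ`,
the braided covector algebra `V̌(R',R)` admits a unique star structure with
`x_i* = x_{σ(i)}`. -/
theorem stmt0 (n : ℕ) (hn : 1 ≤ n)
    (R R' : Fin n → Fin n → Fin n → Fin n → ℂ)
    (σ : Fin n → Fin n) (hσ : Function.Involutive σ)
    (hR' : RealTypeII n R' σ ∨ AntirealTypeII n R' σ) :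
    ∃! f : CovAlg n R' → CovAlg n R',
      IsStarStructure f ∧ ∀ i : Fin n, f (xg n R' i) = xg n R' (σ i) :=
  stmt0_general n R' σ hσ hR'
end
end

section
/- Let R′ be an n⁴ complex array which is of real type II with respect to an involution σ of {1,…,n}, or of antireal type II with respect to σ. Then the braided vector algebra V(R′,R) admits a (necessarily unique) star structure * satisfying (v^i)* = v^{σ(i)} for all i = 1,…,n. -/
open scoped ComplexConjugate

noncomputable section

/-!
A conjugate-linear antihomomorphism `A → B` of ℂ-algebras is the same as an algebra
homomorphism from `A` to `Bᵐᵒᵖ` with scalars acting through complex conjugation. Since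
`V(R',R)` is a quotient of a free algebra, `v^i ↦ v^{σ i}` extends to such a map exactly when
it carries each defining relation, reversed and conjugated, to an identity of `V(R',R)`. For
real type II this identity is the defining relation at `(σ j, σ i)`, reindexed by `σ`; for
antireal type II it is that relation solved for the reversed product by inverting the matrix
of `R'`. The composite of two such maps is an algebra endomorphism, determined by its values on
the generators; this gives both involutivity and uniqueness.
-/

def ConjOpp (B : Type*) : Type _ := Bᵐᵒᵖ

namespace ConjOpp

variable {R B : Type*} [CommSemiring R] [StarRing R]

instance [Semiring B] : Semiring (ConjOpp B) := inferInstanceAs (Semiring Bᵐᵒᵖ)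

instance [Semiring B] [Algebra R B] : Algebra R (ConjOpp B) :=
  RingHom.toAlgebra' ((algebraMap R Bᵐᵒᵖ).comp (starRingEnd R))
    fun c x => Algebra.commutes (A := Bᵐᵒᵖ) (starRingEnd R c) x

def op : B → ConjOpp B := MulOpposite.op

def unop : ConjOpp B → B := MulOpposite.unop

@[simp] lemma unop_op (b : B) : unop (op b) = b := rfl

lemma unop_injective : Function.Injective (unop : ConjOpp B → B) := MulOpposite.unop_injective

section Semiring

variable [Semiring B]

@[simp] lemma unop_add (x y : ConjOpp B) : unop (x + y) = unop x + unop y := rfl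

@[simp] lemma unop_mul (x y : ConjOpp B) : unop (x * y) = unop y * unop x := rfl

@[simp] lemma unop_one : unop (1 : ConjOpp B) = 1 := rfl

@[simp] lemma unop_sum {ι : Type*} (s : Finset ι) (x : ι → ConjOpp B) :
    unop (∑ i ∈ s, x i) = ∑ i ∈ s, unop (x i) :=
  Finset.unop_sum (s := s) x

@[simp] lemma unop_smul [Algebra R B] (c : R) (x : ConjOpp B) :
    unop (c • x) = starRingEnd R c • unop x := by
  rw [Algebra.smul_def, unop_mul, Algebra.smul_def]
  exact (Algebra.commutes _ _).symm

end Semiring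

end ConjOpp

section ConjLinearAntiHom

variable {A B C : Type*} [Semiring A] [Algebra ℂ A] [Semiring B] [Algebra ℂ B]
  [Semiring C] [Algebra ℂ C]

lemma isConjLinearAntiHom_unop_comp (φ : A →ₐ[ℂ] ConjOpp B) :
    IsConjLinearAntiHom fun a => ConjOpp.unop (φ a) :=
  ⟨by simp, by simp, by simp, by simp⟩

lemma IsConjLinearAntiHom.map_zero {f : A → B} (hf : IsConjLinearAntiHom f) : f 0 = 0 := by
  simpa using hf.2.1 0 0

def IsConjLinearAntiHom.compAlgHom {f : A → B} {g : B → C} (hf : IsConjLinearAntiHom f)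
    (hg : IsConjLinearAntiHom g) : A →ₐ[ℂ] C :=
  AlgHom.mk'
    { toFun := g ∘ f
      map_one' := by simp [hf.2.2.2, hg.2.2.2]
      map_mul' := fun a b => by simp [hf.2.2.1, hg.2.2.1]
      map_zero' := by simp [hf.map_zero, hg.map_zero]
      map_add' := fun a b => by simp [hf.1, hg.1] }
    fun c a => by simp [hf.2.1, hg.2.1]

lemma isStarStructure_iff {f : A → A} :
    IsStarStructure f ↔ IsConjLinearAntiHom f ∧ Function.Involutive f :=
  ⟨fun ⟨hadd, hsmul, hmul, hone, hinv⟩ => ⟨⟨hadd, hsmul, hmul, hone⟩, hinv⟩,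
    fun ⟨⟨hadd, hsmul, hmul, hone⟩, hinv⟩ => ⟨hadd, hsmul, hmul, hone, hinv⟩⟩

end ConjLinearAntiHom

lemma Matrix.sum_inv_smul_of_forall_eq_sum_smul {ι K M : Type*} [Fintype ι] [DecidableEq ι]
    [CommRing K] [AddCommMonoid M] [Module K M] {A : Matrix ι ι K} (hA : IsUnit A)
    {v w : ι → M} (h : ∀ p, v p = ∑ q, A p q • w q) (k : ι) :
    ∑ p, A⁻¹ k p • v p = w k := by
  have hinv : A⁻¹ * A = 1 := Matrix.nonsing_inv_mul A ((Matrix.isUnit_iff_isUnit_det A).mp hA)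
  calc ∑ p, A⁻¹ k p • v p = ∑ q, (A⁻¹ * A) k q • w q := by
        simp only [h, Finset.smul_sum, smul_smul, Matrix.mul_apply, Finset.sum_smul]
        exact Finset.sum_comm
    _ = w k := by simp [hinv, Matrix.one_apply]

lemma Function.Bijective.sum_comp₂ {ι M : Type*} [Fintype ι] [AddCommMonoid M] {σ : ι → ι}
    (hσ : σ.Bijective) (F : ι → ι → M) :
    ∑ a, ∑ b, F (σ a) (σ b) = ∑ a, ∑ b, F a b := by
  simp only [hσ.sum_comp (F _)]
  exact hσ.sum_comp fun a => ∑ b, F a b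

section VecAlg

variable {n : ℕ} {R' : Fin n → Fin n → Fin n → Fin n → ℂ} {σ : Fin n → Fin n}

variable (R') in
lemma vg_mul_vg (i j : Fin n) :
    vg n R' i * vg n R' j = ∑ a, ∑ b, R' i a j b • (vg n R' b * vg n R' a) := by
  have h := RingQuot.mkAlgHom_rel ℂ (VecRel.rel (n := n) (R' := R') i j)
  simp only [map_mul, map_sum, map_smul] at h
  exact h

lemma VecAlg.algHom_ext {A : Type*} [Semiring A] [Algebra ℂ A]
    {φ ψ : VecAlg n R' →ₐ[ℂ] A} (h : ∀ i, φ (vg n R' i) = ψ (vg n R' i)) : φ = ψ :=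
  RingQuot.ringQuot_ext' ℂ _ _ (FreeAlgebra.hom_ext (funext h))

variable (R' σ) in
def StarCompatible : Prop :=
  ∀ i j, vg n R' (σ j) * vg n R' (σ i) =
    ∑ a, ∑ b, conj (R' i a j b) • (vg n R' (σ a) * vg n R' (σ b))

lemma sum_invEntry_smul_vg_mul_vg (hR' : IsUnit (toMat n R')) (k l : Fin n) :
    ∑ a, ∑ b, invEntry n R' k a l b • (vg n R' a * vg n R' b) = vg n R' l * vg n R' k := by
  have hrel : ∀ p : Fin n × Fin n,
      vg n R' p.1 * vg n R' p.2 = ∑ q, toMat n R' p q • (vg n R' q.2 * vg n R' q.1) := by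
    intro p
    rw [vg_mul_vg, Fintype.sum_prod_type]
    rfl
  simpa only [Fintype.sum_prod_type, invEntry] using
    Matrix.sum_inv_smul_of_forall_eq_sum_smul hR' hrel (k, l)

lemma RealTypeII.starCompatible (hσ : Function.Bijective σ) (hR' : RealTypeII n R' σ) :
    StarCompatible R' σ := by
  intro i j
  simp only [hR' i _ j _]
  rw [vg_mul_vg]
  exact Finset.sum_comm.trans
    (hσ.sum_comp₂ fun a b => R' (σ j) b (σ i) a • (vg n R' a * vg n R' b)).symm

lemma AntirealTypeII.starCompatible (hσ : Function.Bijective σ)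
    (hR' : AntirealTypeII n R' σ) : StarCompatible R' σ := by
  intro i j
  simp only [hR'.2]
  rw [← sum_invEntry_smul_vg_mul_vg hR'.1]
  exact (hσ.sum_comp₂ fun a b =>
    invEntry n R' (σ i) a (σ j) b • (vg n R' a * vg n R' b)).symm

variable (R' σ) in
def starLift : FreeAlgebra ℂ (Fin n) →ₐ[ℂ] ConjOpp (VecAlg n R') :=
  FreeAlgebra.lift ℂ fun i => ConjOpp.op (vg n R' (σ i))

lemma StarCompatible.starLift_eq (h : StarCompatible R' σ) ⦃x y : FreeAlgebra ℂ (Fin n)⦄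
    (hxy : VecRel n R' x y) : starLift R' σ x = starLift R' σ y := by
  obtain ⟨i, j⟩ := hxy
  apply ConjOpp.unop_injective
  simpa [starLift] using h i j

def vecStar (h : StarCompatible R' σ) : VecAlg n R' → VecAlg n R' :=
  fun a => ConjOpp.unop (RingQuot.liftAlgHom ℂ ⟨starLift R' σ, h.starLift_eq⟩ a)

lemma vecStar_vg (h : StarCompatible R' σ) (i : Fin n) :
    vecStar h (vg n R' i) = vg n R' (σ i) := by
  simp [vecStar, vg, starLift]

lemma isConjLinearAntiHom_vecStar (h : StarCompatible R' σ) : IsConjLinearAntiHom (vecStar h) :=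
  isConjLinearAntiHom_unop_comp _

lemma IsConjLinearAntiHom.comp_eq_self {f g : VecAlg n R' → VecAlg n R'}
    (hf : IsConjLinearAntiHom f) (hg : IsConjLinearAntiHom g)
    (h : ∀ i, g (f (vg n R' i)) = vg n R' i) (a : VecAlg n R') : g (f a) = a :=
  AlgHom.congr_fun (VecAlg.algHom_ext (φ := hf.compAlgHom hg) (ψ := AlgHom.id ℂ _) h) a

end VecAlg

theorem stmt1_general (n : ℕ)
    (R' : Fin n → Fin n → Fin n → Fin n → ℂ)
    (σ : Fin n → Fin n) (hσ : Function.Involutive σ)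
    (hR' : RealTypeII n R' σ ∨ AntirealTypeII n R' σ) :
    ∃! f : VecAlg n R' → VecAlg n R',
      IsStarStructure f ∧ ∀ i : Fin n, f (vg n R' i) = vg n R' (σ i) := by
  have hcompat : StarCompatible R' σ :=
    hR'.elim (·.starCompatible hσ.bijective) (·.starCompatible hσ.bijective)
  have hstar := isConjLinearAntiHom_vecStar hcompat
  have hvg := vecStar_vg hcompat
  have hinv : Function.Involutive (vecStar hcompat) :=
    hstar.comp_eq_self hstar fun i => by rw [hvg, hvg, hσ]
  refine ⟨vecStar hcompat, ⟨isStarStructure_iff.2 ⟨hstar, hinv⟩, hvg⟩, ?_⟩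
  rintro g ⟨hg, hgv⟩
  have hgf := hstar.comp_eq_self (isStarStructure_iff.1 hg).1 fun i => by rw [hvg, hgv, hσ]
  funext a
  calc g a = g (vecStar hcompat (vecStar hcompat a)) := by rw [hinv a]
    _ = vecStar hcompat a := hgf _

/-- if `R'` is of real or antireal type II w.r.t. an involution `σ`,
the braided vector algebra `V(R',R)` admits a unique star structure with
`(v^i)* = v^{σ(i)}`. -/
theorem stmt1 (n : ℕ) (hn : 1 ≤ n)
    (R R' : Fin n → Fin n → Fin n → Fin n → ℂ)
    (σ : Fin n → Fin n) (hσ : Function.Involutive σ)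
    (hR' : RealTypeII n R' σ ∨ AntirealTypeII n R' σ) :
    ∃! f : VecAlg n R' → VecAlg n R',
      IsStarStructure f ∧ ∀ i : Fin n, f (vg n R' i) = vg n R' (σ i) :=
  stmt1_general n R' σ hσ hR'
end
end

section
/- Let R′ and R be n⁴ complex arrays, both of real type I, and let η be a real metric that is both R′-covariant and R-covariant. Then: (i) the braided covector algebra V̌(R′,R) admits a (necessarily unique) star structure ⋆ satisfying x_i⋆ = Σ_a η^{ia} x_a, and the braided vector algebra V(R′,R) admits a (necessarily unique) star structure ⋆ satisfying (v^i)⋆ = Σ_a v^a η_{ai}; (ii) there is a (necessarily unique) conjugate-linear, antimultiplicative, unital involution θ⋆ of the braided tensor square B of V̌(R′,R) with θ⋆(x_i) = Σ_a η^{ia} y_a and θ⋆(y_i) = Σ_a η^{ia} x_a, and every ℂ-algebra homomorphism Δ: V̌(R′,R) → B with Δ(x_i) = x_i + y_i for all i satisfies Δ(a⋆) = θ⋆(Δ(a)) for all a ∈ V̌(R′,R). -/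
open scoped ComplexConjugate

noncomputable section

/-! ### Auxiliary machinery -/

section Aux

open MulOpposite

variable {X : Type*} {B : Type*} [Ring B] [Algebra ℂ B]

/-- The conjugate algebra structure on `B`. -/
def cAlg (B : Type*) [Ring B] [Algebra ℂ B] : Algebra ℂ B :=
  ((algebraMap ℂ B).comp (starRingEnd ℂ)).toAlgebra'
    (fun c x => by simp [Algebra.commutes])

/-- Conjugate-linear multiplicative lift out of the free algebra. -/
def cLift (u : X → B) : FreeAlgebra ℂ X →+* B := by
  letI := cAlg B
  exact (FreeAlgebra.lift ℂ u).toRingHom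

@[simp] lemma cLift_ι (u : X → B) (i : X) : cLift u (FreeAlgebra.ι ℂ i) = u i := by
  letI := cAlg B
  exact FreeAlgebra.lift_ι_apply u i

@[simp] lemma cLift_algebraMap (u : X → B) (c : ℂ) :
    cLift u (algebraMap ℂ (FreeAlgebra ℂ X) c) = algebraMap ℂ B (conj c) := by
  have h : cLift u (algebraMap ℂ (FreeAlgebra ℂ X) c)
      = @algebraMap ℂ B _ _ (cAlg B) c := by
    letI := cAlg B
    exact AlgHom.commutes (FreeAlgebra.lift ℂ u) c
  rw [h, cAlg, RingHom.algebraMap_toAlgebra']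
  rfl

lemma cLift_smul (u : X → B) (c : ℂ) (a : FreeAlgebra ℂ X) :
    cLift u (c • a) = conj c • cLift u a := by
  rw [Algebra.smul_def, map_mul, cLift_algebraMap, ← Algebra.smul_def]

lemma fstar_smul (c : ℂ) (a : FreeAlgebra ℂ X) : star (c • a) = c • star a := by
  rw [Algebra.smul_def, star_mul, FreeAlgebra.star_algebraMap, ← Algebra.commutes,
    ← Algebra.smul_def]

/-- The conjugate-linear anti-homomorphism out of the free algebra, bundled as a ring
homomorphism into the opposite algebra. -/
def GH (u : X → B) : FreeAlgebra ℂ X →+* Bᵐᵒᵖ where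
  toFun a := op (cLift u (star a))
  map_one' := by simp
  map_mul' a b := by simp [star_mul]
  map_zero' := by simp
  map_add' a b := by simp [star_add]

@[simp] lemma GH_apply (u : X → B) (a : FreeAlgebra ℂ X) :
    GH u a = op (cLift u (star a)) := rfl

lemma cLift_star_mul (u : X → B) (i j : X) :
    cLift u (star (FreeAlgebra.ι ℂ i * FreeAlgebra.ι ℂ j)) = u j * u i := by
  rw [star_mul, FreeAlgebra.star_ι, FreeAlgebra.star_ι, map_mul, cLift_ι, cLift_ι]

lemma cLift_star_sum (u : X → B) {n : ℕ} (K : Fin n → Fin n → ℂ)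
    (s t : Fin n → Fin n → X) :
    cLift u (star (∑ a : Fin n, ∑ b : Fin n,
        K a b • (FreeAlgebra.ι ℂ (s a b) * FreeAlgebra.ι ℂ (t a b))))
      = ∑ a : Fin n, ∑ b : Fin n, conj (K a b) • (u (t a b) * u (s a b)) := by
  rw [star_sum, map_sum]
  refine Finset.sum_congr rfl fun a _ => ?_
  rw [star_sum, map_sum]
  refine Finset.sum_congr rfl fun b _ => ?_
  rw [fstar_smul, cLift_smul, star_mul, FreeAlgebra.star_ι, FreeAlgebra.star_ι, map_mul,
    cLift_ι, cLift_ι]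

variable (r : FreeAlgebra ℂ X → FreeAlgebra ℂ X → Prop)

/-- The star-type map on the quotient. -/
def starMap (u : X → RingQuot r) (h : ∀ ⦃a b⦄, r a b → GH u a = GH u b) :
    RingQuot r → RingQuot r :=
  fun q => unop (RingQuot.lift ⟨GH u, h⟩ q)

variable (u : X → RingQuot r) (h : ∀ ⦃a b⦄, r a b → GH u a = GH u b)

lemma starMap_mk (a : FreeAlgebra ℂ X) :
    starMap r u h (RingQuot.mkAlgHom ℂ r a) = cLift u (star a) := by
  have h2 : RingQuot.mkAlgHom ℂ r a = RingQuot.mkRingHom r a := by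
    rw [← RingQuot.mkAlgHom_coe ℂ r]; rfl
  rw [starMap, h2, RingQuot.lift_mkRingHom_apply]; rfl

lemma starMap_add (a b : RingQuot r) :
    starMap r u h (a + b) = starMap r u h a + starMap r u h b := by
  simp [starMap, map_add]

lemma starMap_mul (a b : RingQuot r) :
    starMap r u h (a * b) = starMap r u h b * starMap r u h a := by
  simp [starMap, map_mul]

lemma starMap_one : starMap r u h 1 = 1 := by simp [starMap]

lemma starMap_algebraMap (c : ℂ) :
    starMap r u h (algebraMap ℂ (RingQuot r) c) = algebraMap ℂ (RingQuot r) (conj c) := by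
  have h2 : algebraMap ℂ (RingQuot r) c = RingQuot.mkAlgHom ℂ r (algebraMap ℂ _ c) :=
    ((RingQuot.mkAlgHom ℂ r).commutes c).symm
  rw [h2, starMap_mk, FreeAlgebra.star_algebraMap, cLift_algebraMap]

lemma starMap_smul (c : ℂ) (a : RingQuot r) :
    starMap r u h (c • a) = conj c • starMap r u h a := by
  rw [Algebra.smul_def, starMap_mul, starMap_algebraMap, ← Algebra.commutes, ← Algebra.smul_def]

lemma starMap_anti : IsConjLinearAntiHom (starMap r u h) :=
  ⟨starMap_add r u h, starMap_smul r u h, starMap_mul r u h, starMap_one r u h⟩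

lemma starMap_gen (i : X) :
    starMap r u h (RingQuot.mkAlgHom ℂ r (FreeAlgebra.ι ℂ i)) = u i := by
  rw [starMap_mk, FreeAlgebra.star_ι, cLift_ι]

lemma adjoin_gen_top :
    Algebra.adjoin ℂ
      (Set.range fun i : X => RingQuot.mkAlgHom ℂ r (FreeAlgebra.ι ℂ i)) = ⊤ := by
  have h1 : (Set.range fun i : X => RingQuot.mkAlgHom ℂ r (FreeAlgebra.ι ℂ i))
      = (RingQuot.mkAlgHom ℂ r) '' (Set.range (FreeAlgebra.ι ℂ)) := by
    rw [← Set.range_comp]; rfl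
  rw [h1, ← AlgHom.map_adjoin, FreeAlgebra.adjoin_range_ι, Algebra.map_top]
  exact (AlgHom.range_eq_top _).mpr (RingQuot.mkAlgHom_surjective ℂ r)

end Aux

section Ext
variable {A B : Type*} [Ring A] [Algebra ℂ A] [Ring B] [Algebra ℂ B]

lemma anti_algebraMap {f : A → B} (hf : IsConjLinearAntiHom f) (c : ℂ) :
    f (algebraMap ℂ A c) = algebraMap ℂ B (conj c) := by
  rw [Algebra.algebraMap_eq_smul_one, hf.2.1, hf.2.2.2, Algebra.algebraMap_eq_smul_one]

lemma antihom_ext {f g : A → B} (hf : IsConjLinearAntiHom f) (hg : IsConjLinearAntiHom g)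
    {s : Set A} (hs : Algebra.adjoin ℂ s = ⊤) (hfg : ∀ a ∈ s, f a = g a) (a : A) :
    f a = g a := by
  have ha : a ∈ Algebra.adjoin ℂ s := hs ▸ Algebra.mem_top
  refine Algebra.adjoin_induction (p := fun x _ => f x = g x) hfg ?_ ?_ ?_ ha
  · intro c; rw [anti_algebraMap hf, anti_algebraMap hg]
  · intro x y _ _ hx hy; rw [hf.1, hg.1, hx, hy]
  · intro x y _ _ hx hy; rw [hf.2.2.1, hg.2.2.1, hx, hy]

lemma invol_of_gen {f : A → A} (hf : IsConjLinearAntiHom f)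
    {s : Set A} (hs : Algebra.adjoin ℂ s = ⊤) (h : ∀ a ∈ s, f (f a) = a) (a : A) :
    f (f a) = a := by
  have ha : a ∈ Algebra.adjoin ℂ s := hs ▸ Algebra.mem_top
  refine Algebra.adjoin_induction (p := fun x _ => f (f x) = x) h ?_ ?_ ?_ ha
  · intro c; rw [anti_algebraMap hf, anti_algebraMap hf, Complex.conj_conj]
  · intro x y _ _ hx hy; rw [hf.1, hf.1, hx, hy]
  · intro x y _ _ hx hy; rw [hf.2.2.1 x y, hf.2.2.1 (f y) (f x), hx, hy]

end Ext

section Sums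

lemma sum_smul_mul_sum {A : Type*} [Ring A] [Algebra ℂ A] {n : ℕ}
    (α β : Fin n → ℂ) (z w : Fin n → A) :
    (∑ c, α c • z c) * (∑ d, β d • w d)
      = ∑ c, ∑ d, (α c * β d) • (z c * w d) := by
  rw [Finset.sum_mul]
  refine Finset.sum_congr rfl fun c _ => ?_
  rw [Finset.mul_sum]
  refine Finset.sum_congr rfl fun d _ => ?_
  rw [smul_mul_assoc, mul_smul_comm, smul_smul]

lemma sum4_comm {M : Type*} [AddCommMonoid M] {n : ℕ}
    (F : Fin n → Fin n → Fin n → Fin n → M) :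
    ∑ a, ∑ b, ∑ c, ∑ d, F a b c d = ∑ c, ∑ d, ∑ a, ∑ b, F a b c d := by
  have := Finset.sum_comm (s := (Finset.univ : Finset (Fin n × Fin n)))
    (t := (Finset.univ : Finset (Fin n × Fin n)))
    (f := fun p q => F p.1 p.2 q.1 q.2)
  simpa [Fintype.sum_prod_type] using this

/-- The key identity used to check compatibility with the relations. -/
lemma key2 {A : Type*} [Ring A] [Algebra ℂ A] {n : ℕ}
    (R : Fin n → Fin n → Fin n → Fin n → ℂ) (hR : RealTypeI n R)
    (η : Matrix (Fin n) (Fin n) ℂ) (hcov : MetricCovariant n R η)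
    (z w : Fin n → A)
    (hzw : ∀ i j, w i * z j = ∑ a, ∑ b, R a i b j • (z b * w a))
    (i j : Fin n) :
    (∑ c, η j c • w c) * (∑ d, η i d • z d)
      = ∑ a, ∑ b, (conj (R a i b j)) • ((∑ c, η a c • z c) * (∑ d, η b d • w d)) := by
  have lhs : (∑ c, η j c • w c) * (∑ d, η i d • z d)
      = ∑ p, ∑ q, (∑ c, ∑ d, η j c * η i d * R q c p d) • (z p * w q) := by
    rw [sum_smul_mul_sum]
    have e1 : ∀ c d, (η j c * η i d) • (w c * z d)
        = ∑ a, ∑ b, (η j c * η i d * R a c b d) • (z b * w a) := by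
      intro c d
      rw [hzw c d, Finset.smul_sum]
      refine Finset.sum_congr rfl fun a _ => ?_
      rw [Finset.smul_sum]
      refine Finset.sum_congr rfl fun b _ => ?_
      rw [smul_smul]
    calc (∑ c, ∑ d, (η j c * η i d) • (w c * z d))
        = ∑ c, ∑ d, ∑ a, ∑ b, (η j c * η i d * R a c b d) • (z b * w a) := by
          refine Finset.sum_congr rfl fun c _ => Finset.sum_congr rfl fun d _ => e1 c d
      _ = ∑ a, ∑ b, ∑ c, ∑ d, (η j c * η i d * R a c b d) • (z b * w a) := by
          rw [sum4_comm]
      _ = ∑ a, ∑ b, (∑ c, ∑ d, η j c * η i d * R a c b d) • (z b * w a) := by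
          refine Finset.sum_congr rfl fun a _ => Finset.sum_congr rfl fun b _ => ?_
          rw [Finset.sum_smul]
          exact Finset.sum_congr rfl fun c _ => by rw [Finset.sum_smul]
      _ = ∑ p, ∑ q, (∑ c, ∑ d, η j c * η i d * R q c p d) • (z p * w q) := by
          rw [Finset.sum_comm]
  have rhs : (∑ a, ∑ b, (conj (R a i b j)) • ((∑ c, η a c • z c) * (∑ d, η b d • w d)))
      = ∑ p, ∑ q, (∑ a, ∑ b, conj (R a i b j) * (η a p * η b q)) • (z p * w q) := by
    calc (∑ a, ∑ b, (conj (R a i b j)) • ((∑ c, η a c • z c) * (∑ d, η b d • w d)))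
        = ∑ a, ∑ b, ∑ c, ∑ d, (conj (R a i b j) * (η a c * η b d)) • (z c * w d) := by
          refine Finset.sum_congr rfl fun a _ => Finset.sum_congr rfl fun b _ => ?_
          rw [sum_smul_mul_sum, Finset.smul_sum]
          refine Finset.sum_congr rfl fun c _ => ?_
          rw [Finset.smul_sum]
          refine Finset.sum_congr rfl fun d _ => ?_
          rw [smul_smul]
      _ = ∑ c, ∑ d, ∑ a, ∑ b, (conj (R a i b j) * (η a c * η b d)) • (z c * w d) := by
          rw [sum4_comm]
      _ = ∑ p, ∑ q, (∑ a, ∑ b, conj (R a i b j) * (η a p * η b q)) • (z p * w q) := by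
          refine Finset.sum_congr rfl fun p _ => Finset.sum_congr rfl fun q _ => ?_
          rw [Finset.sum_smul]
          exact Finset.sum_congr rfl fun a _ => by rw [Finset.sum_smul]
  rw [lhs, rhs]
  refine Finset.sum_congr rfl fun p _ => Finset.sum_congr rfl fun q _ => ?_
  refine congrArg (· • (z p * w q)) ?_
  have hc := hcov j i q p
  rw [hc, Finset.sum_comm]
  refine Finset.sum_congr rfl fun a _ => Finset.sum_congr rfl fun b _ => ?_
  rw [hR]
  ring

open Kronecker Matrix in
/-- Covariance of the inverse metric. -/
lemma inv_cov {n : ℕ} (R : Fin n → Fin n → Fin n → Fin n → ℂ)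
    (η : Matrix (Fin n) (Fin n) ℂ) (hη : IsUnit η) (hcov : MetricCovariant n R η) :
    ∀ i j k l, (∑ a : Fin n, ∑ b : Fin n, R a i b j * η⁻¹ a k * η⁻¹ b l)
      = ∑ a : Fin n, ∑ b : Fin n, η⁻¹ i a * η⁻¹ j b * R a k b l := by
  have hdet : IsUnit η.det := (Matrix.isUnit_iff_isUnit_det η).mp hη
  set M : Matrix (Fin n × Fin n) (Fin n × Fin n) ℂ := η ⊗ₖ η with hM
  set M' : Matrix (Fin n × Fin n) (Fin n × Fin n) ℂ := η⁻¹ ⊗ₖ η⁻¹ with hM'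
  set N : Matrix (Fin n × Fin n) (Fin n × Fin n) ℂ :=
    Matrix.of (fun p q => R p.1 q.1 p.2 q.2) with hN
  have hMM' : M * M' = 1 := by
    rw [hM, hM', ← Matrix.mul_kronecker_mul, Matrix.mul_nonsing_inv _ hdet,
      Matrix.one_kronecker_one]
  have hM'M : M' * M = 1 := by
    rw [hM, hM', ← Matrix.mul_kronecker_mul, Matrix.nonsing_inv_mul _ hdet,
      Matrix.one_kronecker_one]
  have h1 : M * Nᵀ = N * M := by
    ext ⟨i, j⟩ ⟨k, l⟩
    simp only [Matrix.mul_apply, Fintype.sum_prod_type, hM, hN,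
      Matrix.kroneckerMap_apply, Matrix.transpose_apply, Matrix.of_apply]
    simpa only [mul_assoc] using hcov i j k l
  have h2 : Nᵀ * M' = M' * N := by
    have h3 : M' * (M * Nᵀ) * M' = M' * (N * M) * M' := by rw [h1]
    rwa [← mul_assoc M' M Nᵀ, hM'M, one_mul, ← mul_assoc M' N M, mul_assoc (M' * N) M M',
      hMM', mul_one] at h3
  intro i j k l
  have h4 := congrFun (congrFun h2 (i, j)) (k, l)
  simpa only [Matrix.mul_apply, Fintype.sum_prod_type, hM', hN,
    Matrix.kroneckerMap_apply, Matrix.transpose_apply, Matrix.of_apply, mul_assoc] using h4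

/-- The key identity, vector-algebra version. -/
lemma keyVec {A : Type*} [Ring A] [Algebra ℂ A] {n : ℕ}
    (R : Fin n → Fin n → Fin n → Fin n → ℂ) (hR : RealTypeI n R)
    (η : Matrix (Fin n) (Fin n) ℂ) (hη : IsUnit η) (hcov : MetricCovariant n R η)
    (z : Fin n → A)
    (hz : ∀ i j, z i * z j = ∑ a, ∑ b, R i a j b • (z b * z a))
    (i j : Fin n) :
    (∑ c, η⁻¹ j c • z c) * (∑ d, η⁻¹ i d • z d)
      = ∑ a, ∑ b, (conj (R i a j b)) • ((∑ c, η⁻¹ a c • z c) * (∑ d, η⁻¹ b d • z d)) := by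
  have lhs : (∑ c, η⁻¹ j c • z c) * (∑ d, η⁻¹ i d • z d)
      = ∑ p, ∑ q, (∑ c, ∑ d, η⁻¹ j c * η⁻¹ i d * R c q d p) • (z p * z q) := by
    rw [sum_smul_mul_sum]
    calc (∑ c, ∑ d, (η⁻¹ j c * η⁻¹ i d) • (z c * z d))
        = ∑ c, ∑ d, ∑ a, ∑ b, (η⁻¹ j c * η⁻¹ i d * R c a d b) • (z b * z a) := by
          refine Finset.sum_congr rfl fun c _ => Finset.sum_congr rfl fun d _ => ?_
          rw [hz c d, Finset.smul_sum]
          refine Finset.sum_congr rfl fun a _ => ?_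
          rw [Finset.smul_sum]
          refine Finset.sum_congr rfl fun b _ => ?_
          rw [smul_smul]
      _ = ∑ a, ∑ b, ∑ c, ∑ d, (η⁻¹ j c * η⁻¹ i d * R c a d b) • (z b * z a) := by
          rw [sum4_comm]
      _ = ∑ a, ∑ b, (∑ c, ∑ d, η⁻¹ j c * η⁻¹ i d * R c a d b) • (z b * z a) := by
          refine Finset.sum_congr rfl fun a _ => Finset.sum_congr rfl fun b _ => ?_
          rw [Finset.sum_smul]
          exact Finset.sum_congr rfl fun c _ => by rw [Finset.sum_smul]
      _ = ∑ p, ∑ q, (∑ c, ∑ d, η⁻¹ j c * η⁻¹ i d * R c q d p) • (z p * z q) := by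
          rw [Finset.sum_comm]
  have rhs : (∑ a, ∑ b, (conj (R i a j b)) • ((∑ c, η⁻¹ a c • z c) * (∑ d, η⁻¹ b d • z d)))
      = ∑ p, ∑ q, (∑ a, ∑ b, conj (R i a j b) * (η⁻¹ a p * η⁻¹ b q)) • (z p * z q) := by
    calc (∑ a, ∑ b, (conj (R i a j b)) • ((∑ c, η⁻¹ a c • z c) * (∑ d, η⁻¹ b d • z d)))
        = ∑ a, ∑ b, ∑ c, ∑ d, (conj (R i a j b) * (η⁻¹ a c * η⁻¹ b d)) • (z c * z d) := by
          refine Finset.sum_congr rfl fun a _ => Finset.sum_congr rfl fun b _ => ?_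
          rw [sum_smul_mul_sum, Finset.smul_sum]
          refine Finset.sum_congr rfl fun c _ => ?_
          rw [Finset.smul_sum]
          refine Finset.sum_congr rfl fun d _ => ?_
          rw [smul_smul]
      _ = ∑ c, ∑ d, ∑ a, ∑ b, (conj (R i a j b) * (η⁻¹ a c * η⁻¹ b d)) • (z c * z d) := by
          rw [sum4_comm]
      _ = ∑ p, ∑ q, (∑ a, ∑ b, conj (R i a j b) * (η⁻¹ a p * η⁻¹ b q)) • (z p * z q) := by
          refine Finset.sum_congr rfl fun p _ => Finset.sum_congr rfl fun q _ => ?_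
          rw [Finset.sum_smul]
          exact Finset.sum_congr rfl fun a _ => by rw [Finset.sum_smul]
  rw [lhs, rhs]
  refine Finset.sum_congr rfl fun p _ => Finset.sum_congr rfl fun q _ => ?_
  refine congrArg (· • (z p * z q)) ?_
  have hinv := (inv_cov R η hη hcov j i q p).symm
  rw [hinv, Finset.sum_comm]
  refine Finset.sum_congr rfl fun a _ => Finset.sum_congr rfl fun b _ => ?_
  rw [hR]
  ring

lemma invol_step {A : Type*} [Ring A] [Algebra ℂ A] {f : A → A}
    (hadd : ∀ a b, f (a + b) = f a + f b)
    (hsmul : ∀ (c : ℂ) a, f (c • a) = (starRingEnd ℂ) c • f a)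
    {n : ℕ} (γ : Matrix (Fin n) (Fin n) ℂ)
    (hγ : ∀ i b, (∑ a, conj (γ i a) * γ a b) = (1 : Matrix (Fin n) (Fin n) ℂ) i b)
    (g h : Fin n → A) (hg : ∀ a, f (h a) = ∑ b, γ a b • g b) (i : Fin n) :
    f (∑ a, γ i a • h a) = g i := by
  let F : A →+ A := AddMonoidHom.mk' f hadd
  have hF : ∀ a, F a = f a := fun a => rfl
  calc f (∑ a, γ i a • h a) = ∑ a, f (γ i a • h a) := by
        rw [← hF, map_sum]
        exact Finset.sum_congr rfl fun a _ => rfl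
    _ = ∑ a, ∑ b, (conj (γ i a) * γ a b) • g b := by
        refine Finset.sum_congr rfl fun a _ => ?_
        rw [hsmul, hg, Finset.smul_sum]
        exact Finset.sum_congr rfl fun b _ => by rw [smul_smul]
    _ = ∑ b, (∑ a, conj (γ i a) * γ a b) • g b := by
        rw [Finset.sum_comm]
        refine Finset.sum_congr rfl fun b _ => ?_
        rw [Finset.sum_smul]
    _ = g i := by
        simp only [hγ, Matrix.one_apply]
        simp [Finset.sum_ite_eq, ite_smul]

end Sums

/-- for `R', R` of real type I and a real metric `η` covariant for both,
(i) the braided covectors admit a unique star structure `⋆` with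
`x_i⋆ = Σ_a η^{ia} x_a` and the braided vectors a unique star structure with
`(v^i)⋆ = Σ_a v^a η_{ai}` (`η_{ai} = (η⁻¹) i a`); (ii) the braided tensor square `B`
admits a unique conjugate-linear antimultiplicative unital involution `θ⋆` with
`θ⋆(x_i) = Σ_a η^{ia} y_a`, `θ⋆(y_i) = Σ_a η^{ia} x_a`, and every ℂ-algebra map
`Δ : V̌(R',R) → B` with `Δ(x_i) = x_i + y_i` satisfies `Δ(a⋆) = θ⋆(Δ(a))`. -/
theorem stmt5 (n : ℕ) (hn : 1 ≤ n)
    (R R' : Fin n → Fin n → Fin n → Fin n → ℂ)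
    (hR : RealTypeI n R) (hR' : RealTypeI n R')
    (η : Matrix (Fin n) (Fin n) ℂ) (hη : IsUnit η)
    (hreal : MetricReal n η)
    (hcov' : MetricCovariant n R' η) (hcov : MetricCovariant n R η) :
    (∃! f : CovAlg n R' → CovAlg n R',
      IsStarStructure f ∧
        ∀ i : Fin n, f (xg n R' i) = ∑ a : Fin n, η i a • xg n R' a) ∧
    (∃! g : VecAlg n R' → VecAlg n R',
      IsStarStructure g ∧
        ∀ i : Fin n, g (vg n R' i) = ∑ a : Fin n, η⁻¹ i a • vg n R' a) ∧
    (∃! θ : SqAlg n R' R → SqAlg n R' R,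
      (IsStarStructure θ ∧
        (∀ i : Fin n, θ (Xg n R' R i) = ∑ a : Fin n, η i a • Yg n R' R a) ∧
        (∀ i : Fin n, θ (Yg n R' R i) = ∑ a : Fin n, η i a • Xg n R' R a)) ∧
      ∀ f : CovAlg n R' → CovAlg n R',
        (IsStarStructure f ∧
          ∀ i : Fin n, f (xg n R' i) = ∑ a : Fin n, η i a • xg n R' a) →
        ∀ Δ : CovAlg n R' →ₐ[ℂ] SqAlg n R' R,
          (∀ i : Fin n, Δ (xg n R' i) = Xg n R' R i + Yg n R' R i) →
          ∀ a : CovAlg n R', Δ (f a) = θ (Δ a)) := by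
  classical
  have hdet : IsUnit η.det := (Matrix.isUnit_iff_isUnit_det η).mp hη
  have hrealinv : ∀ i j, conj (η⁻¹ i j) = η i j := by
    intro i j
    rw [← hreal i j, Complex.conj_conj]
  have hγη : ∀ i b : Fin n,
      (∑ a, conj (η i a) * η a b) = (1 : Matrix (Fin n) (Fin n) ℂ) i b := by
    intro i b
    calc (∑ a, conj (η i a) * η a b) = ∑ a, η⁻¹ i a * η a b := by
          refine Finset.sum_congr rfl fun a _ => ?_
          rw [hreal]
      _ = (η⁻¹ * η) i b := (Matrix.mul_apply).symm
      _ = (1 : Matrix (Fin n) (Fin n) ℂ) i b := by rw [Matrix.nonsing_inv_mul η hdet]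
  have hγζ : ∀ i b : Fin n,
      (∑ a, conj (η⁻¹ i a) * η⁻¹ a b) = (1 : Matrix (Fin n) (Fin n) ℂ) i b := by
    intro i b
    calc (∑ a, conj (η⁻¹ i a) * η⁻¹ a b) = ∑ a, η i a * η⁻¹ a b := by
          refine Finset.sum_congr rfl fun a _ => ?_
          rw [hrealinv]
      _ = (η * η⁻¹) i b := (Matrix.mul_apply).symm
      _ = (1 : Matrix (Fin n) (Fin n) ℂ) i b := by rw [Matrix.mul_nonsing_inv η hdet]
  -- ### Part 1 : the braided covector algebra
  have xrel : ∀ i j, xg n R' i * xg n R' j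
      = ∑ a, ∑ b, R' a i b j • (xg n R' b * xg n R' a) := by
    intro i j
    have h := RingQuot.mkAlgHom_rel ℂ (CovRel.rel (R' := R') i j)
    simpa only [map_mul, map_sum, map_smul, xg] using h
  set u1 : Fin n → CovAlg n R' := fun i => ∑ a, η i a • xg n R' a with hu1
  have hcompat1 : ∀ ⦃a b⦄, CovRel n R' a b → GH u1 a = GH u1 b := by
    rintro _ _ ⟨i, j⟩
    simp only [GH_apply]
    congr 1
    rw [cLift_star_mul, cLift_star_sum]
    exact key2 R' hR' η hcov' (xg n R') (xg n R') xrel i j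
  set f1 : CovAlg n R' → CovAlg n R' := starMap (CovRel n R') u1 hcompat1 with hf1
  have hanti1 : IsConjLinearAntiHom f1 := starMap_anti (CovRel n R') u1 hcompat1
  have hgen1 : ∀ i, f1 (xg n R' i) = ∑ a, η i a • xg n R' a := fun i =>
    starMap_gen (CovRel n R') u1 hcompat1 i
  have hs1 : Algebra.adjoin ℂ (Set.range (xg n R')) = ⊤ := adjoin_gen_top (CovRel n R')
  have hinv1 : ∀ a, f1 (f1 a) = a := by
    refine invol_of_gen hanti1 hs1 ?_
    rintro _ ⟨i, rfl⟩
    rw [hgen1 i]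
    exact invol_step hanti1.1 hanti1.2.1 η hγη (xg n R') (xg n R') hgen1 i
  have hstar1 : IsStarStructure f1 :=
    ⟨hanti1.1, hanti1.2.1, hanti1.2.2.1, hanti1.2.2.2, hinv1⟩
  -- ### Part 2 : the braided vector algebra
  have vrel : ∀ i j, vg n R' i * vg n R' j
      = ∑ a, ∑ b, R' i a j b • (vg n R' b * vg n R' a) := by
    intro i j
    have h := RingQuot.mkAlgHom_rel ℂ (VecRel.rel (R' := R') i j)
    simpa only [map_mul, map_sum, map_smul, vg] using h
  set u2 : Fin n → VecAlg n R' := fun i => ∑ a, η⁻¹ i a • vg n R' a with hu2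
  have hcompat2 : ∀ ⦃a b⦄, VecRel n R' a b → GH u2 a = GH u2 b := by
    rintro _ _ ⟨i, j⟩
    simp only [GH_apply]
    congr 1
    rw [cLift_star_mul, cLift_star_sum]
    exact keyVec R' hR' η hη hcov' (vg n R') vrel i j
  set f2 : VecAlg n R' → VecAlg n R' := starMap (VecRel n R') u2 hcompat2 with hf2
  have hanti2 : IsConjLinearAntiHom f2 := starMap_anti (VecRel n R') u2 hcompat2
  have hgen2 : ∀ i, f2 (vg n R' i) = ∑ a, η⁻¹ i a • vg n R' a := fun i =>
    starMap_gen (VecRel n R') u2 hcompat2 i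
  have hs2 : Algebra.adjoin ℂ (Set.range (vg n R')) = ⊤ := adjoin_gen_top (VecRel n R')
  have hinv2 : ∀ a, f2 (f2 a) = a := by
    refine invol_of_gen hanti2 hs2 ?_
    rintro _ ⟨i, rfl⟩
    rw [hgen2 i]
    exact invol_step hanti2.1 hanti2.2.1 η⁻¹ hγζ (vg n R') (vg n R') hgen2 i
  have hstar2 : IsStarStructure f2 :=
    ⟨hanti2.1, hanti2.2.1, hanti2.2.2.1, hanti2.2.2.2, hinv2⟩
  -- ### Part 3 : the braided tensor square
  have xxrel : ∀ i j, Xg n R' R i * Xg n R' R j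
      = ∑ a, ∑ b, R' a i b j • (Xg n R' R b * Xg n R' R a) := by
    intro i j
    have h := RingQuot.mkAlgHom_rel ℂ (SqRel.xx (R' := R') (R := R) i j)
    simpa only [map_mul, map_sum, map_smul, Xg] using h
  have yyrel : ∀ i j, Yg n R' R i * Yg n R' R j
      = ∑ a, ∑ b, R' a i b j • (Yg n R' R b * Yg n R' R a) := by
    intro i j
    have h := RingQuot.mkAlgHom_rel ℂ (SqRel.yy (R' := R') (R := R) i j)
    simpa only [map_mul, map_sum, map_smul, Yg] using h
  have yxrel : ∀ i j, Yg n R' R i * Xg n R' R j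
      = ∑ a, ∑ b, R a i b j • (Xg n R' R b * Yg n R' R a) := by
    intro i j
    have h := RingQuot.mkAlgHom_rel ℂ (SqRel.yx (R' := R') (R := R) i j)
    simpa only [map_mul, map_sum, map_smul, Xg, Yg] using h
  set u3 : Fin n ⊕ Fin n → SqAlg n R' R :=
    Sum.elim (fun i => ∑ a, η i a • Yg n R' R a) (fun i => ∑ a, η i a • Xg n R' R a)
    with hu3
  have hcompat3 : ∀ ⦃a b⦄, SqRel n R' R a b → GH u3 a = GH u3 b := by
    rintro _ _ (⟨i, j⟩ | ⟨i, j⟩ | ⟨i, j⟩) <;>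
      · simp only [GH_apply]
        congr 1
        rw [cLift_star_mul, cLift_star_sum]
        first
          | exact key2 R' hR' η hcov' (Yg n R' R) (Yg n R' R) yyrel i j
          | exact key2 R' hR' η hcov' (Xg n R' R) (Xg n R' R) xxrel i j
          | exact key2 R hR η hcov (Xg n R' R) (Yg n R' R) yxrel i j
  set θ : SqAlg n R' R → SqAlg n R' R := starMap (SqRel n R' R) u3 hcompat3 with hθ
  have hanti3 : IsConjLinearAntiHom θ := starMap_anti (SqRel n R' R) u3 hcompat3
  have hgenx : ∀ i, θ (Xg n R' R i) = ∑ a, η i a • Yg n R' R a := fun i =>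
    starMap_gen (SqRel n R' R) u3 hcompat3 (Sum.inl i)
  have hgeny : ∀ i, θ (Yg n R' R i) = ∑ a, η i a • Xg n R' R a := fun i =>
    starMap_gen (SqRel n R' R) u3 hcompat3 (Sum.inr i)
  have hs3 : Algebra.adjoin ℂ
      (Set.range fun i : Fin n ⊕ Fin n =>
        RingQuot.mkAlgHom ℂ (SqRel n R' R) (FreeAlgebra.ι ℂ i)) = ⊤ :=
    adjoin_gen_top (SqRel n R' R)
  have hinv3 : ∀ a, θ (θ a) = a := by
    refine invol_of_gen hanti3 hs3 ?_
    rintro _ ⟨(i | i), rfl⟩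
    · show θ (θ (Xg n R' R i)) = Xg n R' R i
      rw [hgenx i]
      exact invol_step hanti3.1 hanti3.2.1 η hγη (Xg n R' R) (Yg n R' R) hgeny i
    · show θ (θ (Yg n R' R i)) = Yg n R' R i
      rw [hgeny i]
      exact invol_step hanti3.1 hanti3.2.1 η hγη (Yg n R' R) (Xg n R' R) hgenx i
  have hstar3 : IsStarStructure θ :=
    ⟨hanti3.1, hanti3.2.1, hanti3.2.2.1, hanti3.2.2.2, hinv3⟩
  -- compatibility with coproducts
  have hDelta : ∀ f : CovAlg n R' → CovAlg n R',
      (IsStarStructure f ∧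
        ∀ i : Fin n, f (xg n R' i) = ∑ a : Fin n, η i a • xg n R' a) →
      ∀ Δ : CovAlg n R' →ₐ[ℂ] SqAlg n R' R,
        (∀ i : Fin n, Δ (xg n R' i) = Xg n R' R i + Yg n R' R i) →
        ∀ a : CovAlg n R', Δ (f a) = θ (Δ a) := by
    rintro f ⟨hfst, hfgen⟩ Δ hΔ a
    have h1 : IsConjLinearAntiHom (fun a => Δ (f a)) := by
      refine ⟨fun a b => ?_, fun c a => ?_, fun a b => ?_, ?_⟩
      · show Δ (f (a + b)) = Δ (f a) + Δ (f b)
        rw [hfst.1, map_add]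
      · show Δ (f (c • a)) = (starRingEnd ℂ) c • Δ (f a)
        rw [hfst.2.1, map_smul]
      · show Δ (f (a * b)) = Δ (f b) * Δ (f a)
        rw [hfst.2.2.1, map_mul]
      · show Δ (f 1) = 1
        rw [hfst.2.2.2.1, map_one]
    have h2 : IsConjLinearAntiHom (fun a => θ (Δ a)) := by
      refine ⟨fun a b => ?_, fun c a => ?_, fun a b => ?_, ?_⟩
      · show θ (Δ (a + b)) = θ (Δ a) + θ (Δ b)
        rw [map_add, hanti3.1]
      · show θ (Δ (c • a)) = (starRingEnd ℂ) c • θ (Δ a)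
        rw [map_smul, hanti3.2.1]
      · show θ (Δ (a * b)) = θ (Δ b) * θ (Δ a)
        rw [map_mul, hanti3.2.2.1]
      · show θ (Δ 1) = 1
        rw [map_one, hanti3.2.2.2]
    refine antihom_ext h1 h2 hs1 ?_ a
    rintro _ ⟨i, rfl⟩
    show Δ (f (xg n R' i)) = θ (Δ (xg n R' i))
    rw [hfgen i, hΔ i, hanti3.1, hgenx i, hgeny i, map_sum]
    rw [← Finset.sum_add_distrib]
    refine Finset.sum_congr rfl fun a _ => ?_
    rw [map_smul, hΔ a, smul_add, add_comm]
  refine ⟨⟨f1, ⟨hstar1, hgen1⟩, ?_⟩, ⟨f2, ⟨hstar2, hgen2⟩, ?_⟩,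
    ⟨θ, ⟨⟨hstar3, hgenx, hgeny⟩, hDelta⟩, ?_⟩⟩
  · rintro f' ⟨hst', hg'⟩
    funext a
    refine antihom_ext ⟨hst'.1, hst'.2.1, hst'.2.2.1, hst'.2.2.2.1⟩ hanti1 hs1 ?_ a
    rintro _ ⟨i, rfl⟩
    rw [hg' i, hgen1 i]
  · rintro f' ⟨hst', hg'⟩
    funext a
    refine antihom_ext ⟨hst'.1, hst'.2.1, hst'.2.2.1, hst'.2.2.2.1⟩ hanti2 hs2 ?_ a
    rintro _ ⟨i, rfl⟩
    rw [hg' i, hgen2 i]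
  · rintro θ' ⟨⟨hst', hgx', hgy'⟩, _⟩
    funext a
    refine antihom_ext ⟨hst'.1, hst'.2.1, hst'.2.2.1, hst'.2.2.2.1⟩ hanti3 hs3 ?_ a
    rintro _ ⟨(i | i), rfl⟩
    · show θ' (Xg n R' R i) = θ (Xg n R' R i)
      rw [hgx' i, hgenx i]
    · show θ' (Yg n R' R i) = θ (Yg n R' R i)
      rw [hgy' i, hgeny i]
end
end

section
/- Let R′ and R be n⁴ complex arrays, both of real type I, and let η be a real metric that is both R′-covariant and R-covariant. Let * be the star structure on the braided covector algebra V̌(R′,R) with x_i* = Σ_a x_a η^{ai}, and let B be the braided tensor square of V̌(R′,R). Then: (i) there is a (necessarily unique) conjugate-linear, antimultiplicative, unital involution θ of B with θ(x_i) = Σ_a y_a η^{ai} and θ(y_i) = Σ_a x_a η^{ai} for all i; (ii) every ℂ-algebra homomorphism Δ: V̌(R′,R) → B with Δ(x_i) = x_i + y_i for all i satisfies Δ(a*) = θ(Δ(a)) for all a ∈ V̌(R′,R). -/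
open scoped ComplexConjugate
set_option linter.unusedSectionVars false

noncomputable section

/-! ### Auxiliary machinery for the proof -/


section AuxCO

/-- The conjugate-opposite algebra of a ℂ-algebra. -/
def CO (A : Type*) : Type _ := Aᵐᵒᵖ

variable {A : Type*} [Ring A] [Algebra ℂ A]

instance : Ring (CO A) := inferInstanceAs (Ring Aᵐᵒᵖ)

/-- inclusion into conjugate-opposite algebra -/
def coOp (a : A) : CO A := MulOpposite.op a

/-- projection from conjugate-opposite algebra -/
def coUnop (a : CO A) : A := MulOpposite.unop a

instance : Algebra ℂ (CO A) :=
  RingHom.toAlgebra' (((algebraMap ℂ Aᵐᵒᵖ).comp (starRingEnd ℂ) : ℂ →+* CO A))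
    (fun c x => by
      show (coOp (algebraMap ℂ A ((starRingEnd ℂ) c))) * x =
        x * coOp (algebraMap ℂ A ((starRingEnd ℂ) c))
      exact MulOpposite.unop_injective (by
        show MulOpposite.unop x * _ = _ * MulOpposite.unop x
        exact (Algebra.commutes _ _).symm))

lemma coUnop_coOp (a : A) : coUnop (coOp a) = a := rfl

lemma coUnop_inj {a b : CO A} (h : coUnop a = coUnop b) : a = b :=
  MulOpposite.unop_injective h

lemma coUnop_mul (a b : CO A) : coUnop (a * b) = coUnop b * coUnop a := rfl

lemma coUnop_one : coUnop (1 : CO A) = 1 := rfl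

lemma coUnop_add (a b : CO A) : coUnop (a + b) = coUnop a + coUnop b := rfl

lemma coUnop_sum {ι : Type*} (s : Finset ι) (g : ι → CO A) :
    coUnop (∑ i ∈ s, g i) = ∑ i ∈ s, coUnop (g i) :=
  map_sum (MulOpposite.opAddEquiv (α := A)).symm.toAddMonoidHom g s

lemma coAlgebraMap (c : ℂ) :
    algebraMap ℂ (CO A) c = coOp (algebraMap ℂ A ((starRingEnd ℂ) c)) := rfl

lemma coUnop_smul (c : ℂ) (w : CO A) :
    coUnop (c • w) = (starRingEnd ℂ) c • coUnop w := by
  rw [Algebra.smul_def, coAlgebraMap, coUnop_mul, coUnop_coOp, Algebra.smul_def,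
    ← Algebra.commutes]

end AuxCO

section AuxSums

lemma expand2 {n : ℕ} {A : Type*} [Ring A] [Algebra ℂ A]
    (α β : Fin n → ℂ) (u v : Fin n → A) :
    (∑ c : Fin n, α c • u c) * (∑ d : Fin n, β d • v d) =
      ∑ c : Fin n, ∑ d : Fin n, (α c * β d) • (u c * v d) := by
  rw [Finset.sum_mul]
  refine Finset.sum_congr rfl fun c _ => ?_
  rw [Finset.mul_sum]
  refine Finset.sum_congr rfl fun d _ => ?_
  rw [smul_mul_assoc, mul_smul_comm, smul_smul]

lemma sum_swap4 {n : ℕ} {M : Type*} [AddCommMonoid M]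
    (F : Fin n → Fin n → Fin n → Fin n → M) :
    ∑ c : Fin n, ∑ d : Fin n, ∑ p : Fin n, ∑ q : Fin n, F c d p q =
      ∑ p : Fin n, ∑ q : Fin n, ∑ c : Fin n, ∑ d : Fin n, F c d p q :=
  calc ∑ c : Fin n, ∑ d : Fin n, ∑ p : Fin n, ∑ q : Fin n, F c d p q
      = ∑ c : Fin n, ∑ p : Fin n, ∑ d : Fin n, ∑ q : Fin n, F c d p q :=
        Finset.sum_congr rfl fun _ _ => Finset.sum_comm
    _ = ∑ p : Fin n, ∑ c : Fin n, ∑ d : Fin n, ∑ q : Fin n, F c d p q :=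
        Finset.sum_comm
    _ = ∑ p : Fin n, ∑ c : Fin n, ∑ q : Fin n, ∑ d : Fin n, F c d p q :=
        Finset.sum_congr rfl fun _ _ => Finset.sum_congr rfl fun _ _ =>
          Finset.sum_comm
    _ = ∑ p : Fin n, ∑ q : Fin n, ∑ c : Fin n, ∑ d : Fin n, F c d p q :=
        Finset.sum_congr rfl fun _ _ => Finset.sum_comm

lemma keyScalar {n : ℕ} {T : Fin n → Fin n → Fin n → Fin n → ℂ}
    {η : Matrix (Fin n) (Fin n) ℂ} (hcov : MetricCovariant n T η)
    (p q i j : Fin n) :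
    ∑ c : Fin n, ∑ d : Fin n, η c j * η d i * T p c q d =
      ∑ a : Fin n, ∑ b : Fin n, T j b i a * η q a * η p b := by
  have h := hcov p q j i
  calc ∑ c : Fin n, ∑ d : Fin n, η c j * η d i * T p c q d
      = ∑ a : Fin n, ∑ b : Fin n, T p a q b * η a j * η b i :=
        Finset.sum_congr rfl fun a _ => Finset.sum_congr rfl fun b _ => by ring
    _ = ∑ a : Fin n, ∑ b : Fin n, η p a * η q b * T j a i b := h.symm
    _ = ∑ b : Fin n, ∑ a : Fin n, η p a * η q b * T j a i b := Finset.sum_comm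
    _ = ∑ a : Fin n, ∑ b : Fin n, T j b i a * η q a * η p b :=
        Finset.sum_congr rfl fun a _ => Finset.sum_congr rfl fun b _ => by ring

lemma keyAlg {n : ℕ} {T : Fin n → Fin n → Fin n → Fin n → ℂ}
    {η : Matrix (Fin n) (Fin n) ℂ}
    (hT : RealTypeI n T)
    (hcov : MetricCovariant n T η)
    {A : Type*} [Ring A] [Algebra ℂ A] (u v : Fin n → A)
    (hrel : ∀ c d, u c * v d =
      ∑ p : Fin n, ∑ q : Fin n, T p c q d • (v q * u p))
    (i j : Fin n) :
    (∑ c : Fin n, η c j • u c) * (∑ d : Fin n, η d i • v d) =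
      ∑ a : Fin n, ∑ b : Fin n, (starRingEnd ℂ) (T a i b j) •
        ((∑ c : Fin n, η c a • v c) * (∑ d : Fin n, η d b • u d)) := by
  have hRside : (∑ a : Fin n, ∑ b : Fin n, (starRingEnd ℂ) (T a i b j) •
        ((∑ c : Fin n, η c a • v c) * (∑ d : Fin n, η d b • u d))) =
      ∑ c : Fin n, ∑ d : Fin n,
        (∑ a : Fin n, ∑ b : Fin n, T j b i a * η c a * η d b) • (v c * u d) := by
    calc ∑ a : Fin n, ∑ b : Fin n, (starRingEnd ℂ) (T a i b j) •
          ((∑ c : Fin n, η c a • v c) * (∑ d : Fin n, η d b • u d))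
        = ∑ a : Fin n, ∑ b : Fin n, ∑ c : Fin n, ∑ d : Fin n,
            (T j b i a * η c a * η d b) • (v c * u d) := by
          refine Finset.sum_congr rfl fun a _ => Finset.sum_congr rfl fun b _ => ?_
          rw [expand2, Finset.smul_sum]
          refine Finset.sum_congr rfl fun c _ => ?_
          rw [Finset.smul_sum]
          refine Finset.sum_congr rfl fun d _ => ?_
          rw [smul_smul, hT]
          ring_nf
      _ = ∑ c : Fin n, ∑ d : Fin n, ∑ a : Fin n, ∑ b : Fin n,
            (T j b i a * η c a * η d b) • (v c * u d) := sum_swap4 _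
      _ = ∑ c : Fin n, ∑ d : Fin n,
            (∑ a : Fin n, ∑ b : Fin n, T j b i a * η c a * η d b) • (v c * u d) := by
          refine Finset.sum_congr rfl fun c _ => Finset.sum_congr rfl fun d _ => ?_
          rw [Finset.sum_smul]
          exact Finset.sum_congr rfl fun a _ => by rw [Finset.sum_smul]
  rw [hRside]
  calc (∑ c : Fin n, η c j • u c) * (∑ d : Fin n, η d i • v d)
      = ∑ c : Fin n, ∑ d : Fin n, (η c j * η d i) • (u c * v d) := expand2 _ _ _ _
    _ = ∑ c : Fin n, ∑ d : Fin n, ∑ p : Fin n, ∑ q : Fin n,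
          (η c j * η d i * T p c q d) • (v q * u p) := by
        refine Finset.sum_congr rfl fun c _ => Finset.sum_congr rfl fun d _ => ?_
        rw [hrel, Finset.smul_sum]
        refine Finset.sum_congr rfl fun p _ => ?_
        rw [Finset.smul_sum]
        refine Finset.sum_congr rfl fun q _ => ?_
        rw [smul_smul]
    _ = ∑ p : Fin n, ∑ q : Fin n, ∑ c : Fin n, ∑ d : Fin n,
          (η c j * η d i * T p c q d) • (v q * u p) := sum_swap4 _
    _ = ∑ p : Fin n, ∑ q : Fin n,
          (∑ c : Fin n, ∑ d : Fin n, η c j * η d i * T p c q d) • (v q * u p) := by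
        refine Finset.sum_congr rfl fun p _ => Finset.sum_congr rfl fun q _ => ?_
        rw [Finset.sum_smul]
        exact Finset.sum_congr rfl fun c _ => by rw [Finset.sum_smul]
    _ = ∑ q : Fin n, ∑ p : Fin n,
          (∑ c : Fin n, ∑ d : Fin n, η c j * η d i * T p c q d) • (v q * u p) :=
        Finset.sum_comm
    _ = ∑ q : Fin n, ∑ p : Fin n,
          (∑ a : Fin n, ∑ b : Fin n, T j b i a * η q a * η p b) • (v q * u p) := by
        refine Finset.sum_congr rfl fun q _ => Finset.sum_congr rfl fun p _ => ?_
        rw [keyScalar hcov]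

lemma invSum {n : ℕ} {η : Matrix (Fin n) (Fin n) ℂ} (hη : IsUnit η)
    (hreal : MetricReal n η)
    {A : Type*} [AddCommMonoid A] [Module ℂ A] (w : Fin n → A) (i : Fin n) :
    ∑ a : Fin n, (starRingEnd ℂ) (η a i) • (∑ b : Fin n, η b a • w b) = w i := by
  have hd := (Matrix.isUnit_iff_isUnit_det η).mp hη
  calc ∑ a : Fin n, (starRingEnd ℂ) (η a i) • (∑ b : Fin n, η b a • w b)
      = ∑ a : Fin n, ∑ b : Fin n, (η b a * η⁻¹ a i) • w b := by
        refine Finset.sum_congr rfl fun a _ => ?_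
        rw [Finset.smul_sum]
        refine Finset.sum_congr rfl fun b _ => ?_
        rw [smul_smul, hreal a i, mul_comm]
    _ = ∑ b : Fin n, ∑ a : Fin n, (η b a * η⁻¹ a i) • w b := Finset.sum_comm
    _ = ∑ b : Fin n, ((η * η⁻¹) b i) • w b := by
        refine Finset.sum_congr rfl fun b _ => ?_
        rw [Matrix.mul_apply, Finset.sum_smul]
    _ = w i := by
        rw [Matrix.mul_nonsing_inv η hd]
        simp [Matrix.one_apply]

lemma ringQuot_ext {S : Type*} {r : FreeAlgebra ℂ S → FreeAlgebra ℂ S → Prop}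
    {C : Type*} [Ring C] [Algebra ℂ C] (σ : ℂ → ℂ) (m : C → C → C)
    (g₁ g₂ : RingQuot r → C)
    (hadd₁ : ∀ a b, g₁ (a + b) = g₁ a + g₁ b)
    (hsmul₁ : ∀ (c : ℂ) a, g₁ (c • a) = σ c • g₁ a)
    (hmul₁ : ∀ a b, g₁ (a * b) = m (g₁ a) (g₁ b))
    (hone₁ : g₁ 1 = 1)
    (hadd₂ : ∀ a b, g₂ (a + b) = g₂ a + g₂ b)
    (hsmul₂ : ∀ (c : ℂ) a, g₂ (c • a) = σ c • g₂ a)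
    (hmul₂ : ∀ a b, g₂ (a * b) = m (g₂ a) (g₂ b))
    (hone₂ : g₂ 1 = 1)
    (hgen : ∀ s : S, g₁ (RingQuot.mkAlgHom ℂ r (FreeAlgebra.ι ℂ s)) =
      g₂ (RingQuot.mkAlgHom ℂ r (FreeAlgebra.ι ℂ s))) :
    ∀ z, g₁ z = g₂ z := by
  intro z
  obtain ⟨w, rfl⟩ := RingQuot.mkAlgHom_surjective ℂ r z
  induction w using FreeAlgebra.induction with
  | grade0 c =>
      rw [AlgHom.commutes, Algebra.algebraMap_eq_smul_one, hsmul₁, hsmul₂, hone₁, hone₂]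
  | grade1 s => exact hgen s
  | mul a b ha hb => rw [map_mul, hmul₁, hmul₂, ha, hb]
  | add a b ha hb => rw [map_add, hadd₁, hadd₂, ha, hb]

end AuxSums

section ThetaConstruction

variable (n : ℕ) (R R' : Fin n → Fin n → Fin n → Fin n → ℂ)
  (η : Matrix (Fin n) (Fin n) ℂ)

lemma Xrel (c d : Fin n) : Xg n R' R c * Xg n R' R d =
    ∑ p : Fin n, ∑ q : Fin n, R' p c q d • (Xg n R' R q * Xg n R' R p) := by
  have h := RingQuot.mkAlgHom_rel ℂ (SqRel.xx (n := n) (R' := R') (R := R) c d)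
  simpa [Xg, map_sum, map_smul, map_mul] using h

lemma Yrel (c d : Fin n) : Yg n R' R c * Yg n R' R d =
    ∑ p : Fin n, ∑ q : Fin n, R' p c q d • (Yg n R' R q * Yg n R' R p) := by
  have h := RingQuot.mkAlgHom_rel ℂ (SqRel.yy (n := n) (R' := R') (R := R) c d)
  simpa [Yg, map_sum, map_smul, map_mul] using h

lemma YXrel (c d : Fin n) : Yg n R' R c * Xg n R' R d =
    ∑ p : Fin n, ∑ q : Fin n, R p c q d • (Xg n R' R q * Yg n R' R p) := by
  have h := RingQuot.mkAlgHom_rel ℂ (SqRel.yx (n := n) (R' := R') (R := R) c d)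
  simpa [Xg, Yg, map_sum, map_smul, map_mul] using h

/-- underlying lift for θ -/
def PhiFun : FreeAlgebra ℂ (Fin n ⊕ Fin n) →ₐ[ℂ] CO (SqAlg n R' R) :=
  FreeAlgebra.lift ℂ (Sum.elim
    (fun i => coOp (∑ a : Fin n, η a i • Yg n R' R a))
    (fun i => coOp (∑ a : Fin n, η a i • Xg n R' R a)))

lemma PhiFun_inl (i : Fin n) : PhiFun n R R' η (FreeAlgebra.ι ℂ (Sum.inl i)) =
    coOp (∑ a : Fin n, η a i • Yg n R' R a) := by
  simp [PhiFun]

lemma PhiFun_inr (i : Fin n) : PhiFun n R R' η (FreeAlgebra.ι ℂ (Sum.inr i)) =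
    coOp (∑ a : Fin n, η a i • Xg n R' R a) := by
  simp [PhiFun]

lemma PhiFun_rel (hR : RealTypeI n R) (hR' : RealTypeI n R')
    (hcov' : MetricCovariant n R' η) (hcov : MetricCovariant n R η) :
    ∀ ⦃x y⦄, SqRel n R' R x y → PhiFun n R R' η x = PhiFun n R R' η y := by
  intro x y h
  cases h with
  | xx i j =>
      apply coUnop_inj
      simp only [map_mul, map_sum, map_smul, PhiFun_inl, PhiFun_inr,
        coUnop_mul, coUnop_smul, coUnop_sum, coUnop_coOp]
      exact keyAlg hR' hcov' (Yg n R' R) (Yg n R' R) (Yrel n R R') i j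
  | yy i j =>
      apply coUnop_inj
      simp only [map_mul, map_sum, map_smul, PhiFun_inl, PhiFun_inr,
        coUnop_mul, coUnop_smul, coUnop_sum, coUnop_coOp]
      exact keyAlg hR' hcov' (Xg n R' R) (Xg n R' R) (Xrel n R R') i j
  | yx i j =>
      apply coUnop_inj
      simp only [map_mul, map_sum, map_smul, PhiFun_inl, PhiFun_inr,
        coUnop_mul, coUnop_smul, coUnop_sum, coUnop_coOp]
      exact keyAlg hR hcov (Yg n R' R) (Xg n R' R) (YXrel n R R') i j

variable (hR : RealTypeI n R) (hR' : RealTypeI n R')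
  (hcov' : MetricCovariant n R' η) (hcov : MetricCovariant n R η)

/-- the star structure θ on the braided tensor square -/
def thetaFun : SqAlg n R' R → SqAlg n R' R :=
  fun z => coUnop (RingQuot.liftAlgHom ℂ
    ⟨PhiFun n R R' η, PhiFun_rel n R R' η hR hR' hcov' hcov⟩ z)

lemma theta_add (a b : SqAlg n R' R) :
    thetaFun n R R' η hR hR' hcov' hcov (a + b) =
      thetaFun n R R' η hR hR' hcov' hcov a + thetaFun n R R' η hR hR' hcov' hcov b := by
  unfold thetaFun; rw [map_add, coUnop_add]

lemma theta_smul (c : ℂ) (a : SqAlg n R' R) :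
    thetaFun n R R' η hR hR' hcov' hcov (c • a) =
      (starRingEnd ℂ) c • thetaFun n R R' η hR hR' hcov' hcov a := by
  unfold thetaFun; rw [map_smul, coUnop_smul]

lemma theta_mul (a b : SqAlg n R' R) :
    thetaFun n R R' η hR hR' hcov' hcov (a * b) =
      thetaFun n R R' η hR hR' hcov' hcov b * thetaFun n R R' η hR hR' hcov' hcov a := by
  unfold thetaFun; rw [map_mul, coUnop_mul]

lemma theta_one : thetaFun n R R' η hR hR' hcov' hcov 1 = 1 := by
  unfold thetaFun; rw [map_one, coUnop_one]

lemma theta_sum (α : Fin n → ℂ) (z : Fin n → SqAlg n R' R) :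
    thetaFun n R R' η hR hR' hcov' hcov (∑ a : Fin n, α a • z a) =
      ∑ a : Fin n, (starRingEnd ℂ) (α a) •
        thetaFun n R R' η hR hR' hcov' hcov (z a) := by
  unfold thetaFun
  rw [map_sum, coUnop_sum]
  exact Finset.sum_congr rfl fun a _ => by rw [map_smul, coUnop_smul]

lemma theta_X (i : Fin n) : thetaFun n R R' η hR hR' hcov' hcov (Xg n R' R i) =
    ∑ a : Fin n, η a i • Yg n R' R a := by
  show coUnop ((RingQuot.liftAlgHom ℂ ⟨PhiFun n R R' η,
    PhiFun_rel n R R' η hR hR' hcov' hcov⟩)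
    (RingQuot.mkAlgHom ℂ (SqRel n R' R) (FreeAlgebra.ι ℂ (Sum.inl i)))) = _
  rw [RingQuot.liftAlgHom_mkAlgHom_apply, PhiFun_inl, coUnop_coOp]

lemma theta_Y (i : Fin n) : thetaFun n R R' η hR hR' hcov' hcov (Yg n R' R i) =
    ∑ a : Fin n, η a i • Xg n R' R a := by
  show coUnop ((RingQuot.liftAlgHom ℂ ⟨PhiFun n R R' η,
    PhiFun_rel n R R' η hR hR' hcov' hcov⟩)
    (RingQuot.mkAlgHom ℂ (SqRel n R' R) (FreeAlgebra.ι ℂ (Sum.inr i)))) = _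
  rw [RingQuot.liftAlgHom_mkAlgHom_apply, PhiFun_inr, coUnop_coOp]

end ThetaConstruction

/-- for `R', R` of real type I, `η` a real metric covariant for both,
and `*` the star structure on `V̌(R',R)` with `x_i* = Σ_a x_a η^{ai}`: (i) the
braided tensor square `B` admits a unique conjugate-linear antimultiplicative
unital involution `θ` with `θ(x_i) = Σ_a y_a η^{ai}`, `θ(y_i) = Σ_a x_a η^{ai}`;
(ii) every ℂ-algebra map `Δ : V̌(R',R) → B` with `Δ(x_i) = x_i + y_i` satisfies
`Δ(a*) = θ(Δ(a))`. -/
theorem stmt7 (n : ℕ) (hn : 1 ≤ n)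
    (R R' : Fin n → Fin n → Fin n → Fin n → ℂ)
    (hR : RealTypeI n R) (hR' : RealTypeI n R')
    (η : Matrix (Fin n) (Fin n) ℂ) (hη : IsUnit η)
    (hreal : MetricReal n η)
    (hcov' : MetricCovariant n R' η) (hcov : MetricCovariant n R η)
    (f : CovAlg n R' → CovAlg n R')
    (hf : IsStarStructure f)
    (hfgen : ∀ i : Fin n, f (xg n R' i) = ∑ a : Fin n, η a i • xg n R' a) :
    ∃! θ : SqAlg n R' R → SqAlg n R' R,
      (IsStarStructure θ ∧
        (∀ i : Fin n, θ (Xg n R' R i) = ∑ a : Fin n, η a i • Yg n R' R a) ∧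
        (∀ i : Fin n, θ (Yg n R' R i) = ∑ a : Fin n, η a i • Xg n R' R a)) ∧
      ∀ Δ : CovAlg n R' →ₐ[ℂ] SqAlg n R' R,
        (∀ i : Fin n, Δ (xg n R' i) = Xg n R' R i + Yg n R' R i) →
        ∀ a : CovAlg n R', Δ (f a) = θ (Δ a) := by
  refine ⟨thetaFun n R R' η hR hR' hcov' hcov,
    ⟨⟨⟨theta_add n R R' η hR hR' hcov' hcov,
      theta_smul n R R' η hR hR' hcov' hcov,
      theta_mul n R R' η hR hR' hcov' hcov,
      theta_one n R R' η hR hR' hcov' hcov, ?invol⟩,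
      theta_X n R R' η hR hR' hcov' hcov,
      theta_Y n R R' η hR hR' hcov' hcov⟩, ?delta⟩, ?uniq⟩
  case invol =>
    refine ringQuot_ext (fun c => c) (fun a b => a * b)
      (fun z => thetaFun n R R' η hR hR' hcov' hcov
        (thetaFun n R R' η hR hR' hcov' hcov z)) id
      (fun a b => by simp only [theta_add])
      (fun c a => by simp only [theta_smul, Complex.conj_conj])
      (fun a b => by simp only [theta_mul])
      (by simp only [theta_one])
      (fun a b => rfl) (fun c a => rfl) (fun a b => rfl) rfl ?igen
    intro s
    cases s with
    | inl i =>
        show thetaFun n R R' η hR hR' hcov' hcov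
          (thetaFun n R R' η hR hR' hcov' hcov (Xg n R' R i)) = Xg n R' R i
        rw [theta_X, theta_sum]
        simp only [theta_Y]
        exact invSum hη hreal (Xg n R' R) i
    | inr i =>
        show thetaFun n R R' η hR hR' hcov' hcov
          (thetaFun n R R' η hR hR' hcov' hcov (Yg n R' R i)) = Yg n R' R i
        rw [theta_Y, theta_sum]
        simp only [theta_X]
        exact invSum hη hreal (Yg n R' R) i
  case delta =>
    intro Δ hΔ a
    refine ringQuot_ext (starRingEnd ℂ) (fun a b => b * a)
      (fun z => Δ (f z))
      (fun z => thetaFun n R R' η hR hR' hcov' hcov (Δ z))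
      (fun a b => by simp only [hf.1, map_add])
      (fun c a => by simp only [hf.2.1, map_smul])
      (fun a b => by simp only [hf.2.2.1, map_mul])
      (by simp only [hf.2.2.2.1, map_one])
      (fun a b => by simp only [map_add, theta_add])
      (fun c a => by simp only [map_smul, theta_smul])
      (fun a b => by simp only [map_mul, theta_mul])
      (by simp only [map_one, theta_one])
      ?dgen a
    intro i
    show Δ (f (xg n R' i)) =
      thetaFun n R R' η hR hR' hcov' hcov (Δ (xg n R' i))
    rw [hfgen i, map_sum, hΔ i, theta_add, theta_X, theta_Y]
    simp only [map_smul, hΔ]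
    simp [smul_add, Finset.sum_add_distrib, add_comm]
  case uniq =>
    rintro θ' ⟨⟨⟨h'add, h'smul, h'mul, h'one, _⟩, h'X, h'Y⟩, _⟩
    funext z
    refine ringQuot_ext (starRingEnd ℂ) (fun a b => b * a)
      θ' (thetaFun n R R' η hR hR' hcov' hcov)
      h'add h'smul h'mul h'one
      (theta_add n R R' η hR hR' hcov' hcov)
      (theta_smul n R R' η hR hR' hcov' hcov)
      (theta_mul n R R' η hR hR' hcov' hcov)
      (theta_one n R R' η hR hR' hcov' hcov) ?ugen z
    intro s
    cases s with
    | inl i =>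
        show θ' (Xg n R' R i) =
          thetaFun n R R' η hR hR' hcov' hcov (Xg n R' R i)
        rw [h'X i, theta_X]
    | inr i =>
        show θ' (Yg n R' R i) =
          thetaFun n R R' η hR hR' hcov' hcov (Yg n R' R i)
        rw [h'Y i, theta_Y]
end
end

section
/- Let R be an invertible n⁴ complex array of real type I admitting a second inverse R̃. For multi-indices I = (i₀,i₁), J = (j₀,j₁), K = (k₀,k₁), L = (l₀,l₁) in {1,…,n}², define 𝐑′^I{}_J{}^K{}_L = Σ_{a,b,c,d} (R⁻¹)^d{}_{k₀}{}^{j₀}{}_a R^{k₁}{}_b{}^a{}_{i₀} R^{i₁}{}_c{}^b{}_{l₁} R̃^c{}_{j₁}{}^{l₀}{}_d and 𝐑^I{}_J{}^K{}_L = Σ_{a,b,c,d} R^{j₀}{}_a{}^d{}_{k₀} R^{k₁}{}_b{}^a{}_{i₀} R^{i₁}{}_c{}^b{}_{l₁} R̃^c{}_{j₁}{}^{l₀}{}_d, and let σ be the involution of {1,…,n}² given by σ(i₀,i₁) = (i₁,i₀). Then 𝐑 is of real type II with respect to σ, i.e. conj(𝐑^I{}_J{}^K{}_L) = 𝐑^{σ(K)}{}_{σ(L)}{}^{σ(I)}{}_{σ(J)},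 and 𝐑′ is of antireal type II with respect to σ, i.e. 𝐑′ is invertible and conj(𝐑′^I{}_J{}^K{}_L) = (𝐑′⁻¹)^{σ(I)}{}_{σ(J)}{}^{σ(K)}{}_{σ(L)}. -/
open scoped ComplexConjugate

noncomputable section

/-- An n⁸ array indexed by multi-indices `I = (i₀,i₁) ∈ {1,…,n}²`, viewed as a
matrix on ℂ^{n²}⊗ℂ^{n²} in the same index convention. -/
def toMat2 (n : ℕ)
    (A : Fin n × Fin n → Fin n × Fin n → Fin n × Fin n → Fin n × Fin n → ℂ) :
    Matrix ((Fin n × Fin n) × (Fin n × Fin n)) ((Fin n × Fin n) × (Fin n × Fin n)) ℂ :=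
  Matrix.of fun p q => A p.1 q.1 p.2 q.2

/-- The q-Minkowski space relations matrix
`𝐑′^I{}_J{}^K{}_L = Σ (R⁻¹)^d{}_{k₀}{}^{j₀}{}_a R^{k₁}{}_b{}^a{}_{i₀}
R^{i₁}{}_c{}^b{}_{l₁} R̃^c{}_{j₁}{}^{l₀}{}_d`. -/
def bigR'mink (n : ℕ) (R Rt : Fin n → Fin n → Fin n → Fin n → ℂ)
    (I J K L : Fin n × Fin n) : ℂ :=
  ∑ a : Fin n, ∑ b : Fin n, ∑ c : Fin n, ∑ d : Fin n,
    invEntry n R d K.1 J.1 a * R K.2 b a I.1 * R I.2 c b L.2 * Rt c J.2 L.1 d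

/-- The q-Minkowski space braiding matrix
`𝐑^I{}_J{}^K{}_L = Σ R^{j₀}{}_a{}^d{}_{k₀} R^{k₁}{}_b{}^a{}_{i₀}
R^{i₁}{}_c{}^b{}_{l₁} R̃^c{}_{j₁}{}^{l₀}{}_d`. -/
def bigRmink (n : ℕ) (R Rt : Fin n → Fin n → Fin n → Fin n → ℂ)
    (I J K L : Fin n × Fin n) : ℂ :=
  ∑ a : Fin n, ∑ b : Fin n, ∑ c : Fin n, ∑ d : Fin n,
    R J.1 a d K.1 * R K.2 b a I.1 * R I.2 c b L.2 * Rt c J.2 L.1 d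

/-!
Write `M†` (`conjReindex`) for the matrix `M` with conjugated entries and both multi-indices
swapped; `†` is a ring endomorphism of square matrices. Real type I of `R` says that
`toMat R† = (toMat R)ᵀ` and that the partial transpose of `R` is `†`-invariant, so `R⁻¹` and `R̃`,
which invert these matrices, are again of real type I. Conjugating `𝐑` factor by factor then only
relabels its summation indices.

For `𝐑′` the point is the factorisation `𝐑′ = X * Y`, where `X` (`bigR'minkLeft`) carries the
factors `R⁻¹ R` and `Y` (`bigR'minkRight`) the factors `R R̃`. Contracting `R̃` against `R` and then
`R` against `R⁻¹` gives `Y * X† = 1`. Applying `†` yields `Y† * X = 1`, hence `X * Y† = 1`, and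
`𝐑′ * 𝐑′† = X * (Y * X†) * Y† = 1`: the inverse of `𝐑′` is `𝐑′†`, which is antireality of type II.
-/

namespace Matrix

variable {ι : Type*} [Fintype ι] [DecidableEq ι]

def conjReindex (e : ι ≃ ι) : Matrix ι ι ℂ →+* Matrix ι ι ℂ :=
  (reindexAlgEquiv ℂ ℂ e).toRingHom.comp (starRingEnd ℂ).mapMatrix

@[simp]
lemma conjReindex_apply (e : ι ≃ ι) (M : Matrix ι ι ℂ) (i j : ι) :
    conjReindex e M i j = conj (M (e.symm i) (e.symm j)) := rfl

lemma conjReindex_symm_conjReindex (e : ι ≃ ι) (M : Matrix ι ι ℂ) :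
    conjReindex e.symm (conjReindex e M) = M := by
  ext i j
  simp

lemma map_eq_nonsing_inv_of_mul_eq_one {K : Type*} [CommRing K]
    (f : Matrix ι ι K →+* Matrix ι ι K) {A B C : Matrix ι ι K} (hA : f A = C) (hBA : B * A = 1) :
    f B = C⁻¹ :=
  (inv_eq_left_inv (by rw [← hA, ← map_mul, hBA, map_one])).symm

end Matrix

open Matrix

def swapEach (α : Type*) : (α × α) × (α × α) ≃ (α × α) × (α × α) :=
  (Equiv.prodComm α α).prodCongr (Equiv.prodComm α α)

@[simp]
lemma swapEach_apply {α : Type*} (p : (α × α) × (α × α)) :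
    swapEach α p = (p.1.swap, p.2.swap) := rfl

@[simp]
lemma swapEach_symm (α : Type*) : (swapEach α).symm = swapEach α := rfl

def toMatPartialTranspose (n : ℕ) (R : Fin n → Fin n → Fin n → Fin n → ℂ) :
    Matrix (Fin n × Fin n) (Fin n × Fin n) ℂ :=
  Matrix.of fun p q => R p.1 q.1 q.2 p.2

def bigR'minkLeft (n : ℕ) (R : Fin n → Fin n → Fin n → Fin n → ℂ) :
    Matrix ((Fin n × Fin n) × (Fin n × Fin n)) ((Fin n × Fin n) × (Fin n × Fin n)) ℂ :=
  Matrix.of fun p w => if p.1.2 = w.1.2 then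
    ∑ a : Fin n, invEntry n R w.2.2 p.2.1 w.1.1 a * R p.2.2 w.2.1 a p.1.1 else 0

def bigR'minkRight (n : ℕ) (R Rt : Fin n → Fin n → Fin n → Fin n → ℂ) :
    Matrix ((Fin n × Fin n) × (Fin n × Fin n)) ((Fin n × Fin n) × (Fin n × Fin n)) ℂ :=
  Matrix.of fun w q => if w.1.1 = q.1.1 then
    ∑ c : Fin n, R w.1.2 c w.2.1 q.2.2 * Rt c q.1.2 q.2.1 w.2.2 else 0

section

variable {n : ℕ} {R Rt : Fin n → Fin n → Fin n → Fin n → ℂ}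

lemma toMatPartialTranspose_mul_eq_one
    (hRt : ∀ i j k l, (∑ a : Fin n, ∑ b : Fin n, Rt i a b j * R a k l b) =
      (if i = k then (1 : ℂ) else 0) * (if l = j then 1 else 0)) :
    toMatPartialTranspose n Rt * toMatPartialTranspose n R = 1 := by
  ext ⟨i, j⟩ ⟨k, l⟩
  simp only [mul_apply, Fintype.sum_prod_type, toMatPartialTranspose, of_apply, hRt, one_apply,
    Prod.mk.injEq, ite_zero_mul_ite_zero, one_mul, eq_comm (a := l)]

lemma conjReindex_toMatPartialTranspose (hR : RealTypeI n R) :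
    conjReindex (Equiv.prodComm _ _) (toMatPartialTranspose n R) = toMatPartialTranspose n R := by
  ext ⟨i, j⟩ ⟨k, l⟩
  simpa [toMatPartialTranspose] using hR j l k i

lemma conjReindex_toMat (hR : RealTypeI n R) :
    conjReindex (Equiv.prodComm _ _) (toMat n R) = (toMat n R)ᵀ := by
  ext ⟨i, j⟩ ⟨k, l⟩
  simpa [toMat] using hR j l i k

lemma RealTypeI.of_toMatPartialTranspose_mul_eq_one (hR : RealTypeI n R)
    (hRt : toMatPartialTranspose n Rt * toMatPartialTranspose n R = 1) : RealTypeI n Rt := by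
  have h := map_eq_nonsing_inv_of_mul_eq_one _ (conjReindex_toMatPartialTranspose hR) hRt
  rw [inv_eq_left_inv hRt] at h
  intro i j k l
  simpa [toMatPartialTranspose] using congr_fun₂ h (l, i) (k, j)

lemma RealTypeI.invEntry (hinv : IsUnit (toMat n R)) (hR : RealTypeI n R) :
    RealTypeI n (invEntry n R) := by
  have h := map_eq_nonsing_inv_of_mul_eq_one _ (conjReindex_toMat hR)
    (nonsing_inv_mul _ ((isUnit_iff_isUnit_det _).1 hinv))
  rw [← transpose_nonsing_inv] at h
  intro i j k l
  simpa [_root_.invEntry] using congr_fun₂ h (k, i) (l, j)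

lemma conj_bigRmink (hR : RealTypeI n R) (hRt : RealTypeI n Rt) (I J K L : Fin n × Fin n) :
    conj (bigRmink n R Rt I J K L) = bigRmink n R Rt K.swap L.swap I.swap J.swap := by
  simp only [bigRmink, map_sum, map_mul, hR _ _ _ _, hRt _ _ _ _, Prod.fst_swap, Prod.snd_swap]
  rw [Finset.sum_comm]
  refine Finset.sum_congr rfl fun a _ => Finset.sum_congr rfl fun b _ => ?_
  rw [Finset.sum_comm]
  refine Finset.sum_congr rfl fun c _ => Finset.sum_congr rfl fun d _ => ?_
  ring

lemma toMat2_bigR'mink :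
    toMat2 n (bigR'mink n R Rt) = bigR'minkLeft n R * bigR'minkRight n R Rt := by
  ext ⟨⟨i₀, i₁⟩, ⟨k₀, k₁⟩⟩ ⟨⟨j₀, j₁⟩, ⟨l₀, l₁⟩⟩
  simp only [toMat2, bigR'mink, of_apply, bigR'minkLeft, bigR'minkRight, mul_apply, mul_ite,
    ite_mul, Finset.sum_mul_sum, zero_mul, mul_zero, Fintype.sum_prod_type, Finset.sum_ite_irrel,
    Finset.sum_const_zero, Finset.sum_ite_eq, Finset.mem_univ, ↓reduceIte, Finset.sum_ite_eq']
  rw [Finset.sum_comm]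
  refine Finset.sum_congr rfl fun b _ => ?_
  rw [Finset.sum_congr rfl fun a _ => Finset.sum_comm, Finset.sum_comm]
  refine Finset.sum_congr rfl fun d _ => Finset.sum_congr rfl fun a _ =>
    Finset.sum_congr rfl fun c _ => ?_
  ring

lemma sum_sum_mul_of_toMatPartialTranspose_mul_eq_one
    (hRt : toMatPartialTranspose n Rt * toMatPartialTranspose n R = 1)
    (u v : Fin n → ℂ) (x y : Fin n) :
    ∑ j : Fin n, ∑ l : Fin n, (∑ c : Fin n, u c * Rt c j l x) * (∑ a : Fin n, v a * R j a y l) =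
      if x = y then ∑ c : Fin n, u c * v c else 0 := by
  calc _ = ∑ c : Fin n, ∑ a : Fin n, ∑ p : Fin n × Fin n, u c * v a *
        (toMatPartialTranspose n Rt (c, x) p * toMatPartialTranspose n R p (a, y)) := by
        rw [← Fintype.sum_prod_type']
        simp only [Finset.sum_mul_sum]
        rw [Finset.sum_comm]
        refine Finset.sum_congr rfl fun c _ => ?_
        rw [Finset.sum_comm]
        refine Finset.sum_congr rfl fun a _ => Finset.sum_congr rfl fun p _ => ?_
        simp only [toMatPartialTranspose, of_apply]
        ring
    _ = ∑ c : Fin n, ∑ a : Fin n,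
        u c * v a * (1 : Matrix (Fin n × Fin n) (Fin n × Fin n) ℂ) (c, x) (a, y) := by
        simp only [← Finset.mul_sum, ← mul_apply, hRt]
    _ = _ := by
        split_ifs with h <;> simp [one_apply, h]

lemma sum_sum_mul_invEntry (hinv : IsUnit (toMat n R)) (i k j l : Fin n) :
    ∑ c : Fin n, ∑ m : Fin n, R i c k m * invEntry n R c j m l =
      (1 : Matrix (Fin n × Fin n) (Fin n × Fin n) ℂ) (i, k) (j, l) := by
  rw [← mul_nonsing_inv _ ((isUnit_iff_isUnit_det _).1 hinv), mul_apply, Fintype.sum_prod_type]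
  rfl

lemma sum_sum_sum_mul_invEntry (hinv : IsUnit (toMat n R))
    (hRt : toMatPartialTranspose n Rt * toMatPartialTranspose n R = 1)
    (x₂ x₃ x₄ y₂ y₃ y₄ : Fin n) :
    ∑ j : Fin n, ∑ l : Fin n, ∑ m : Fin n, (∑ c : Fin n, R x₂ c x₃ m * Rt c j l x₄) *
      (∑ a : Fin n, invEntry n R a y₂ m y₃ * R j a y₄ l) =
      if x₄ = y₄ then (1 : Matrix (Fin n × Fin n) (Fin n × Fin n) ℂ) (x₂, x₃) (y₂, y₃) else 0 := by
  rw [Finset.sum_congr rfl fun _ _ => Finset.sum_comm, Finset.sum_comm]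
  simp only [sum_sum_mul_of_toMatPartialTranspose_mul_eq_one hRt]
  split_ifs
  · rw [Finset.sum_comm, sum_sum_mul_invEntry hinv]
  · simp

lemma bigR'minkRight_mul_conjReindex_bigR'minkLeft (hinv : IsUnit (toMat n R))
    (hR : RealTypeI n R) (hRt : toMatPartialTranspose n Rt * toMatPartialTranspose n R = 1) :
    bigR'minkRight n R Rt * conjReindex (swapEach _) (bigR'minkLeft n R) = 1 := by
  have hRinv := hR.invEntry hinv
  ext ⟨⟨x₁, x₂⟩, ⟨x₃, x₄⟩⟩ ⟨⟨y₁, y₂⟩, ⟨y₃, y₄⟩⟩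
  simp only [bigR'minkRight, bigR'minkLeft, mul_apply, of_apply, conjReindex_apply, swapEach_symm,
    swapEach_apply, Prod.swap_prod_mk, Prod.snd_swap, Prod.fst_swap, apply_ite conj, map_sum,
    map_mul, hRinv _ _ _ _, hR _ _ _ _, map_zero, mul_ite, ite_mul, zero_mul, mul_zero,
    Fintype.sum_prod_type, Finset.sum_ite_irrel, Finset.sum_const_zero,
    sum_sum_sum_mul_invEntry hinv hRt, Finset.sum_ite_eq', Finset.mem_univ, ↓reduceIte,
    one_apply, Prod.mk.injEq]
  split_ifs <;> simp_all

lemma toMat2_bigR'mink_mul_conjReindex (hinv : IsUnit (toMat n R)) (hR : RealTypeI n R)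
    (hRt : toMatPartialTranspose n Rt * toMatPartialTranspose n R = 1) :
    toMat2 n (bigR'mink n R Rt) * conjReindex (swapEach _) (toMat2 n (bigR'mink n R Rt)) = 1 := by
  have hYX := bigR'minkRight_mul_conjReindex_bigR'minkLeft hinv hR hRt
  have hXY : bigR'minkLeft n R * conjReindex (swapEach _) (bigR'minkRight n R Rt) = 1 := by
    have h := congr_arg (conjReindex (swapEach _).symm) hYX
    rw [map_mul, conjReindex_symm_conjReindex, map_one, swapEach_symm] at h
    exact mul_eq_one_comm.1 h
  rw [toMat2_bigR'mink, map_mul, mul_assoc, ← mul_assoc (bigR'minkRight n R Rt), hYX, one_mul,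
    hXY]

end

theorem stmt8_general (n : ℕ)
    (R : Fin n → Fin n → Fin n → Fin n → ℂ)
    (hinv : IsUnit (toMat n R)) (hR : RealTypeI n R)
    (Rt : Fin n → Fin n → Fin n → Fin n → ℂ)
    (hRt1 : ∀ i j k l, (∑ a : Fin n, ∑ b : Fin n, Rt i a b j * R a k l b) =
      (if i = k then (1 : ℂ) else 0) * (if l = j then 1 else 0)) :
    (∀ I J K L : Fin n × Fin n,
      conj (bigRmink n R Rt I J K L) =
        bigRmink n R Rt K.swap L.swap I.swap J.swap) ∧
    IsUnit (toMat2 n (bigR'mink n R Rt)) ∧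
    (∀ I J K L : Fin n × Fin n,
      conj (bigR'mink n R Rt I J K L) =
        (toMat2 n (bigR'mink n R Rt))⁻¹ (I.swap, K.swap) (J.swap, L.swap)) := by
  have hRt := toMatPartialTranspose_mul_eq_one hRt1
  have hmul := toMat2_bigR'mink_mul_conjReindex hinv hR hRt
  refine ⟨conj_bigRmink hR (hR.of_toMatPartialTranspose_mul_eq_one hRt),
    (isUnit_iff_isUnit_det _).2 (isUnit_det_of_right_inverse hmul), fun I J K L => ?_⟩
  rw [inv_eq_right_inv hmul]
  simp [toMat2]

/-- if `R` is invertible of real type I with a second inverse `R̃`,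
then the q-Minkowski braiding `𝐑` is of real type II and the relations matrix `𝐑′`
is of antireal type II, both w.r.t. the involution `σ(i₀,i₁) = (i₁,i₀)` of
`{1,…,n}²`. -/
theorem stmt8 (n : ℕ) (hn : 1 ≤ n)
    (R : Fin n → Fin n → Fin n → Fin n → ℂ)
    (hinv : IsUnit (toMat n R)) (hR : RealTypeI n R)
    (Rt : Fin n → Fin n → Fin n → Fin n → ℂ)
    (hRt1 : ∀ i j k l, (∑ a : Fin n, ∑ b : Fin n, Rt i a b j * R a k l b) =
      (if i = k then (1 : ℂ) else 0) * (if l = j then 1 else 0))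
    (hRt2 : ∀ i j k l, (∑ a : Fin n, ∑ b : Fin n, R i a b j * Rt a k l b) =
      (if i = k then (1 : ℂ) else 0) * (if l = j then 1 else 0)) :
    (∀ I J K L : Fin n × Fin n,
      conj (bigRmink n R Rt I J K L) =
        bigRmink n R Rt K.swap L.swap I.swap J.swap) ∧
    IsUnit (toMat2 n (bigR'mink n R Rt)) ∧
    (∀ I J K L : Fin n × Fin n,
      conj (bigR'mink n R Rt I J K L) =
        (toMat2 n (bigR'mink n R Rt))⁻¹ (I.swap, K.swap) (J.swap, L.swap)) :=
  stmt8_general n R hinv hR Rt hRt1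
end
end
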